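/- arXiv:1210.6614 — 5 statements merged into one kernel-verified Lean document; each statement's English description precedes it below -/
import Mathlib

section
/- If the monomial ordering on A is admissible (no infinite strictly decreasing sequence of monomials), the reduction algorithm which repeatedly subtracts (LC(f_r)/LC(g))·g·c whenever LM(g)·c = LM(f_r) for g ∈ G with small cofactor c terminates and computes a normal form: the result is either zero or its leading monomial is not strictly divisible by the leading monomial of any g ∈ G, and f minus the result has a standard representation with respect to G. -/
/-!  An abstract framework for the standard-basis theory of right modules over
path algebra quotients, following S. King, "A non-commutative F5 algorithm with
an application to the computation of Loewy layers".

`PathAlgQuot` bundles: the monomials (directed paths) of a path algebra `P`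
with their partial concatenation product, a monomial ordering, `P` itself with
its monomial basis, and a quotient algebra `A` of `P` via `ψ`. -/

open scoped BigOperators

structure PathAlgQuot (K : Type*) [Field K] (MonP : Type*) (P : Type*) (A : Type*)
    [Ring P] [Algebra K P] [Ring A] [Algebra K A] where
  /-- partial concatenation of paths; `none` encodes the zero product -/
  mul : MonP → MonP → Option MonP
  mul_assoc' : ∀ a b c, (mul a b).bind (fun x => mul x c) = (mul b c).bind (fun x => mul a x)
  /-- the length of the path -/
  deg : MonP → ℕ
  deg_mul : ∀ {a b ab}, mul a b = some ab → deg ab = deg a + deg b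
  /-- the monomial ordering on `P` -/
  lt : MonP → MonP → Prop
  lt_sto : IsStrictTotalOrder MonP lt
  lt_mul_right : ∀ {a b c ac bc}, lt a b → mul a c = some ac → mul b c = some bc → lt ac bc
  lt_mul_left : ∀ {a b c ca cb}, lt a b → mul c a = some ca → mul c b = some cb → lt ca cb
  /-- the monomial basis of the path algebra `P` -/
  basisP : Module.Basis MonP K P
  basisP_mul : ∀ a b, basisP a * basisP b = (mul a b).elim 0 (fun m => basisP m)
  /-- the quotient map onto `A` -/
  ψ : P →ₐ[K] A
  ψ_surj : Function.Surjective ψ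

namespace PathAlgQuot

variable {K : Type*} [Field K] {MonP : Type*} {P : Type*} {A : Type*}
  [Ring P] [Algebra K P] [Ring A] [Algebra K A]
variable (S : PathAlgQuot K MonP P A)

/-- `m` is the leading monomial of `f ∈ P`. -/
def IsLMP (f : P) (m : MonP) : Prop :=
  m ∈ (S.basisP.repr f).support ∧ ∀ m' ∈ (S.basisP.repr f).support, m' = m ∨ S.lt m' m

/-- the standard monomials of `P` relative to `A`: monomials that are not leading
monomials of elements of `ker ψ`. -/
def Std : Set MonP := {m | ¬ ∃ z : P, z ≠ 0 ∧ S.ψ z = 0 ∧ S.IsLMP z m}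

/-- strict divisibility of monomials of `A` (i.e. of their standard monomial lifts) -/
def SDvd (b b' : S.Std) : Prop := ∃ m : MonP, S.mul b.1 m = some b'.1

end PathAlgQuot

/-- A path algebra quotient together with its preferred basis: the images of the
standard monomials form a basis of `A`. -/
structure PAQBasis (K : Type*) [Field K] (MonP : Type*) (P : Type*) (A : Type*)
    [Ring P] [Algebra K P] [Ring A] [Algebra K A]
    extends PathAlgQuot K MonP P A where
  basisA : Module.Basis toPathAlgQuot.Std K A
  basisA_eq : ∀ s : toPathAlgQuot.Std, basisA s = ψ (basisP s.1)

namespace PAQBasis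

variable {K : Type*} [Field K] {MonP : Type*} {P : Type*} {A : Type*}
  [Ring P] [Algebra K P] [Ring A] [Algebra K A]
variable (S : PAQBasis K MonP P A)

/-- the image in `A` of a monomial of `A` (an element of the preferred basis) -/
noncomputable def mono (b : S.Std) : A := S.ψ (S.basisP b.1)

/-- the product in `A` of two monomials of `A` -/
noncomputable def mulA (b c : S.Std) : A := (S.mul b.1 c.1).elim 0 (fun m => S.ψ (S.basisP m))

/-- `b` is the leading monomial of `f ∈ A` w.r.t. the preferred basis -/
def IsLMA (f : A) (b : S.Std) : Prop :=
  b ∈ (S.basisA.repr f).support ∧ ∀ b' ∈ (S.basisA.repr f).support, b' = b ∨ S.lt b'.1 b.1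

/-- `t` is a toppling of `b` with cofactor `c` (`t = none` encodes the toppling `0`). -/
def IsToppling (b c : S.Std) (t : Option S.Std) : Prop :=
  (S.mulA b c = 0 ∧ t = none) ∨
  ∃ t' : S.Std, t = some t' ∧ S.IsLMA (S.mulA b c) t' ∧ ¬ S.SDvd b t'

/-- `c` is a small cofactor of `b`: it is not the cofactor of any toppling of `b`. -/
def SmallCofactor (b c : S.Std) : Prop := ¬ ∃ t, S.IsToppling b c t

/-- `t` is a minimal toppling of `b` with cofactor `c`. -/
def IsMinimalToppling (b c : S.Std) (t : Option S.Std) : Prop :=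
  S.IsToppling b c t ∧ ∀ c' : S.Std, S.SDvd c' c → c' ≠ c → S.SmallCofactor b c'

/-- the monomial ordering on `A` is admissible: no infinite strictly decreasing sequence -/
def Admissible : Prop := ¬ ∃ f : ℕ → S.Std, ∀ n, S.lt (f (n + 1)).1 (f n).1

end PAQBasis

/-! Generic right-module notions for `F = A^r` (with right scalar action `f·a`),
over the `K`-algebra `A`. -/

namespace RightMod

variable (K : Type*) (A : Type*) [Field K] [Ring A] [Algebra K A] {r : ℕ}

/-- the right action of `A` on `F = A^r` -/
def smul (f : Fin r → A) (a : A) : Fin r → A := fun i => f i * a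

/-- `M` is a right `A`-submodule of `F = A^r` -/
def IsSubmodule (M : Set (Fin r → A)) : Prop :=
  (0 : Fin r → A) ∈ M ∧ (∀ f g, f ∈ M → g ∈ M → f + g ∈ M) ∧
  (∀ (α : K), ∀ f ∈ M, α • f ∈ M) ∧ ∀ f ∈ M, ∀ a : A, smul (A := A) f a ∈ M

/-- `G` generates `M` as a right `A`-module -/
def Generates (G M : Set (Fin r → A)) : Prop :=
  G ⊆ M ∧ ∀ N, IsSubmodule K A N → G ⊆ N → M ⊆ N

/-- `N` is a maximal (proper) submodule of `M` -/
def IsMaxSubmodule (N M : Set (Fin r → A)) : Prop :=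
  IsSubmodule K A N ∧ N ⊆ M ∧ N ≠ M ∧
  ∀ N', IsSubmodule K A N' → N ⊆ N' → N' ⊆ M → N' = N ∨ N' = M

/-- the radical of `M`: the intersection of all maximal submodules of `M` -/
def radSet (M : Set (Fin r → A)) : Set (Fin r → A) := ⋂₀ {N | IsMaxSubmodule K A N M}

/-- the iterated radical `Rad^k(M)` -/
def radIter (M : Set (Fin r → A)) : ℕ → Set (Fin r → A)
  | 0 => M
  | k + 1 => radSet K A (radIter M k)

/-- the product `M·I`: the set of finite sums of products `f·a`, `f ∈ M`, `a ∈ I` -/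
def mulSet (M : Set (Fin r → A)) (I : Set A) : Set (Fin r → A) :=
  {f | ∃ (k : ℕ) (g : Fin k → (Fin r → A)) (a : Fin k → A),
      (∀ i, g i ∈ M) ∧ (∀ i, a i ∈ I) ∧ f = ∑ i, smul (A := A) (g i) (a i)}

/-- the iterated product `M·I^k` -/
def mulIter (M : Set (Fin r → A)) (I : Set A) : ℕ → Set (Fin r → A)
  | 0 => M
  | k + 1 => mulSet (A := A) (mulIter M I k) I

/-- `I` is a right ideal of `A` -/
def IsRightIdeal (I : Set A) : Prop :=
  (0 : A) ∈ I ∧ (∀ x y, x ∈ I → y ∈ I → x + y ∈ I) ∧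
  (∀ (α : K), ∀ x ∈ I, α • x ∈ I) ∧ ∀ x ∈ I, ∀ a : A, x * a ∈ I

/-- `I` is a maximal right ideal of `A` -/
def IsMaxRightIdeal (I : Set A) : Prop :=
  IsRightIdeal K A I ∧ I ≠ Set.univ ∧
  ∀ J, IsRightIdeal K A J → I ⊆ J → J = I ∨ J = Set.univ

/-- the radical of `A`: the intersection of all maximal right ideals -/
def radA : Set A := ⋂₀ {I | IsMaxRightIdeal K A I}

end RightMod

/-- A path algebra quotient with preferred basis, together with a free right
`A`-module `F = A^r` carrying a compatible module monomial ordering. -/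
structure PAQModule (K : Type*) [Field K] (MonP : Type*) (P : Type*) (A : Type*)
    [Ring P] [Algebra K P] [Ring A] [Algebra K A]
    extends PAQBasis K MonP P A where
  /-- the rank of the free module `F = A^r` -/
  r : ℕ
  /-- the module monomial ordering on the monomials of `F` -/
  ltF : (Fin r × toPathAlgQuot.Std) → (Fin r × toPathAlgQuot.Std) → Prop
  ltF_sto : IsStrictTotalOrder (Fin r × toPathAlgQuot.Std) ltF
  ltF_compat : ∀ (i : Fin r) (b₁ b₂ : toPathAlgQuot.Std), lt b₁.1 b₂.1 → ltF (i, b₁) (i, b₂)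
  ltF_mul : ∀ (i j : Fin r) (b₁ b₂ b : toPathAlgQuot.Std) (m₁ : MonP)
      (h₁ : m₁ ∈ toPathAlgQuot.Std),
      toPAQBasis.SmallCofactor b₁ b → mul b₁.1 b.1 = some m₁ →
      ltF (j, b₂) (i, b₁) →
      toPAQBasis.mulA b₂ b = 0 ∨
        ∀ t, toPAQBasis.IsLMA (toPAQBasis.mulA b₂ b) t → ltF (j, t) (i, ⟨m₁, h₁⟩)

namespace PAQModule

variable {K : Type*} [Field K] {MonP : Type*} {P : Type*} {A : Type*}
  [Ring P] [Algebra K P] [Ring A] [Algebra K A]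
variable (S : PAQModule K MonP P A)

/-- the free right `A`-module `F = A^r` -/
abbrev F := Fin S.r → A

/-- the monomials of `F` -/
abbrev MonF := Fin S.r × {m : MonP // m ∈ S.Std}

/-- the right action of `A` on `F` -/
def smulF (f : S.F) (a : A) : S.F := fun i => f i * a

/-- the support of `f ∈ F` in terms of monomials of `F` -/
def suppF (f : S.F) : Set (Fin S.r × S.Std) := {v | S.basisA.repr (f v.1) v.2 ≠ 0}

/-- `v` is the leading monomial of `f ∈ F` -/
def IsLMF (f : S.F) (v : Fin S.r × S.Std) : Prop :=
  v ∈ S.suppF f ∧ ∀ w ∈ S.suppF f, w = v ∨ S.ltF w v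

/-- `≤` on the monomials of `F` -/
def leF (v w : Fin S.r × S.Std) : Prop := v = w ∨ S.ltF v w

/-- strict divisibility of monomials of `F` -/
def SDvdF (v w : Fin S.r × S.Std) : Prop := v.1 = w.1 ∧ S.SDvd v.2 w.2

/-- the leading coefficient of `f` at the monomial `v` -/
noncomputable def LCF (f : S.F) (v : Fin S.r × S.Std) : K := S.basisA.repr (f v.1) v.2

/-- `f` is reducible with respect to `G`: some `g ∈ G` has `LM(g)` strictly
dividing `LM(f)` -/
def Reducible (G : Finset S.F) (f : S.F) : Prop :=
  ∃ g ∈ G, ∃ vg vf, S.IsLMF g vg ∧ S.IsLMF f vf ∧ S.SDvdF vg vf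

/-- `f` has a standard representation with respect to `G` -/
def HasStdRep (G : Finset S.F) (f : S.F) : Prop :=
  ∃ (k : ℕ) (α : Fin k → K) (g : Fin k → S.F) (c : Fin k → S.Std),
    (∀ i, α i ≠ 0) ∧ (∀ i, g i ∈ G) ∧
    f = ∑ i, α i • S.smulF (g i) (S.mono (c i)) ∧
    ∀ i, ∃ vg, S.IsLMF (g i) vg ∧ S.SmallCofactor vg.2 (c i) ∧
      ∃ (m : MonP) (hm : m ∈ S.Std), S.mul vg.2.1 (c i).1 = some m ∧
        S.IsLMF (S.smulF (g i) (S.mono (c i))) (vg.1, ⟨m, hm⟩) ∧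
        ∀ vf, S.IsLMF f vf → S.leF (vg.1, ⟨m, hm⟩) vf

/-- one step of the reduction algorithm: subtract `(LC f/LC g)·g·c` -/
def RedStep (G : Finset S.F) (f f' : S.F) : Prop :=
  ∃ g ∈ G, ∃ vg vf, S.IsLMF g vg ∧ S.IsLMF f vf ∧ ∃ c : S.Std,
    S.SmallCofactor vg.2 c ∧ vg.1 = vf.1 ∧ S.mul vg.2.1 c.1 = some vf.2.1 ∧
    f' = f - (S.LCF f vf * (S.LCF g vg)⁻¹) • S.smulF g (S.mono c)

/-- `f` is zero or irreducible with respect to `G` -/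
def Irreducible' (G : Finset S.F) (f : S.F) : Prop := f = 0 ∨ ¬ S.Reducible G f

/-- `NF` is a normal form function on `F` -/
def IsNFfun (NF : S.F → Finset S.F → S.F) : Prop :=
  ∀ (f : S.F) (G : Finset S.F),
    NF 0 G = 0 ∧ S.Irreducible' G (NF f G) ∧ S.HasStdRep G (f - NF f G)

/-- `G` is a standard basis of `M` -/
def IsStdBasis (G : Finset S.F) (M : Set S.F) : Prop :=
  ↑G ⊆ M \ {0} ∧ ∀ f ∈ M, f ≠ 0 → S.Reducible G f

/-- `G` is interreduced -/
def Interreduced [DecidableEq S.F] (G : Finset S.F) : Prop :=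
  ∀ g ∈ G, ¬ S.Reducible (G.erase g) g

/-- `G'` is an interreduction of `G₀` inside `M` -/
def IsInterreductionOf [DecidableEq S.F] (M : Set S.F) (G' G₀ : Finset S.F) : Prop :=
  ↑G' ⊆ M \ {0} ∧ S.Interreduced G' ∧ ∀ f : S.F, S.Reducible G₀ f → S.Reducible G' f

/-- one pass of the Buchberger-style algorithm: pick `g ∈ G` and a cofactor `c`
of a minimal toppling of `LM(g)` such that `g·c` has no standard representation,
and interreduce `G ∪ {NF(g·c, G)}` -/
def BuchStep [DecidableEq S.F] (M : Set S.F) (NF : S.F → Finset S.F → S.F)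
    (G G' : Finset S.F) : Prop :=
  ∃ g ∈ G, ∃ vg c t, S.IsLMF g vg ∧ S.IsMinimalToppling vg.2 c t ∧
    ¬ S.HasStdRep G (S.smulF g (S.mono c)) ∧
    S.IsInterreductionOf M G' (insert (NF (S.smulF g (S.mono c)) G) G)

end PAQModule
/-- The signed setting: a fixed ordered generating set `ĝ₁,…,ĝ_m` of a submodule
`M` of `F = A^r`, the free module `E = P^m` with the evaluation map
`ev : E → M`, and a compatible well-ordering on the monomials of `E`. -/
structure PAQSigned (K : Type*) [Field K] (MonP : Type*) (P : Type*) (A : Type*)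
    [Ring P] [Algebra K P] [Ring A] [Algebra K A]
    extends PAQModule K MonP P A where
  /-- the number of generators of `M` -/
  m : ℕ
  /-- the fixed generators `ĝ₁,…,ĝ_m` of `M` -/
  gen : Fin m → (Fin r → A)
  /-- the monomial ordering on `E = P^m`; a monomial of `E` is a pair `(i, c)`
  encoding `e_i·c` -/
  ltE : (Fin m × MonP) → (Fin m × MonP) → Prop
  ltE_sto : IsStrictTotalOrder (Fin m × MonP) ltE
  ltE_wf : WellFounded ltE
  ltE_compat : ∀ (i : Fin m) (a b : MonP), lt a b → ltE (i, a) (i, b)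
  ltE_mul : ∀ {i j a b c ac bc}, ltE (i, a) (j, b) →
    mul a c = some ac → mul b c = some bc → ltE (i, ac) (j, bc)

namespace PAQSigned

variable {K : Type*} [Field K] {MonP : Type*} {P : Type*} {A : Type*}
  [Ring P] [Algebra K P] [Ring A] [Algebra K A]
variable (S : PAQSigned K MonP P A)

/-- the monomials of `E` (potential signatures) -/
abbrev Sig := Fin S.m × MonP

/-- the free right `P`-module `E = P^m` -/
abbrev E := Fin S.m → P

/-- `≤` on monomials of `E` -/
def leE (s t : S.Sig) : Prop := s = t ∨ S.ltE s t

/-- `s` is the leading monomial of `ft ∈ E` -/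
def IsLME (ft : S.E) (s : S.Sig) : Prop :=
  s.2 ∈ (S.basisP.repr (ft s.1)).support ∧
  ∀ (j : Fin S.m), ∀ m' ∈ (S.basisP.repr (ft j)).support, (j, m') = s ∨ S.ltE (j, m') s

/-- the evaluation map `ev : E → F`, sending `e_i·c` to `ĝ_i·ψ(c)` -/
noncomputable def ev (ft : S.E) : S.F := ∑ i, S.smulF (S.gen i) (S.ψ (ft i))

/-- the submodule `M` generated by `ĝ₁,…,ĝ_m`, i.e. the image of `ev` -/
def Mset : Set S.F := Set.range S.ev

/-- `(f, s)` is a signed element of `M` -/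
def IsSigned (f : S.F) (s : S.Sig) : Prop := ∃ ft : S.E, S.IsLME ft s ∧ S.ev ft = f

/-- the product `σ·λ(c)` of a signature with (the lift of) a monomial of `A` -/
def sigMul (s : S.Sig) (c : S.Std) : Option S.Sig := (S.mul s.2 c.1).map (fun m' => (s.1, m'))

/-- `f` is `s`-reducible by the signed element `(g, sg)` -/
def SigRedBy (g : S.F) (sg : S.Sig) (f : S.F) (s : S.Sig) : Prop :=
  ∃ vg c, S.IsLMF g vg ∧ S.SmallCofactor vg.2 c ∧
    (∃ (m' : MonP) (hm : m' ∈ S.Std), S.mul vg.2.1 c.1 = some m' ∧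
        ∃ vf, S.IsLMF f vf ∧ vf = (vg.1, ⟨m', hm⟩)) ∧
    ∃ sc, S.sigMul sg c = some sc ∧ S.ltE sc s

/-- `f` is weakly `s`-reducible by the signed element `(g, sg)` -/
def WeakSigRedBy (g : S.F) (sg : S.Sig) (f : S.F) (s : S.Sig) : Prop :=
  ∃ vg c, S.IsLMF g vg ∧ S.SmallCofactor vg.2 c ∧
    (∃ (m' : MonP) (hm : m' ∈ S.Std), S.mul vg.2.1 c.1 = some m' ∧
        ∃ vf, S.IsLMF f vf ∧ vf = (vg.1, ⟨m', hm⟩)) ∧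
    ∃ sc, S.sigMul sg c = some sc ∧ S.leE sc s

/-- `f` is `s`-reducible with respect to the signed set `G` -/
def SigReducible (G : Finset (S.F × S.Sig)) (f : S.F) (s : S.Sig) : Prop :=
  ∃ g ∈ G, S.SigRedBy g.1 g.2 f s

/-- `f` is weakly `s`-reducible with respect to the signed set `G` -/
def WeakSigReducible (G : Finset (S.F × S.Sig)) (f : S.F) (s : S.Sig) : Prop :=
  ∃ g ∈ G, S.WeakSigRedBy g.1 g.2 f s

/-- `f` is `s`-reducible with respect to `M` -/
def SigReducibleM (f : S.F) (s : S.Sig) : Prop :=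
  ∃ g sg, g ≠ 0 ∧ S.IsSigned g sg ∧ S.SigRedBy g sg f s

/-- `f` is weakly `s`-reducible with respect to `M` -/
def WeakSigReducibleM (f : S.F) (s : S.Sig) : Prop :=
  ∃ g sg, g ≠ 0 ∧ S.IsSigned g sg ∧ S.WeakSigRedBy g sg f s

/-- `G` is a signed subset of `M∖{0}` -/
def IsSignedSubset (G : Finset (S.F × S.Sig)) : Prop :=
  ∀ p ∈ G, p.1 ≠ 0 ∧ S.IsSigned p.1 p.2

/-- `G` is interreduced (signed sense) -/
def SigInterreduced (G : Finset (S.F × S.Sig)) : Prop :=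
  (∀ g ∈ G, ¬ S.SigReducible G g.1 g.2) ∧
  ∀ g ∈ G, ∀ g' ∈ G, g' ≠ g →
    ¬ ∃ vg' c, S.IsLMF g'.1 vg' ∧ S.SmallCofactor vg'.2 c ∧
      (∃ (m' : MonP) (hm : m' ∈ S.Std), S.mul vg'.2.1 c.1 = some m' ∧
        ∃ vg, S.IsLMF g.1 vg ∧ vg = (vg'.1, ⟨m', hm⟩)) ∧
      S.sigMul g'.2 c = some g.2

/-- `G` is a signed standard basis of `M`: every `σ(f)`-irreducible signed
element `f` of `M∖{0}` is weakly `σ(f)`-reducible with respect to `G`. -/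
def IsSigStdBasis (G : Finset (S.F × S.Sig)) : Prop :=
  ∀ f sf, f ≠ 0 → S.IsSigned f sf → ¬ S.SigReducibleM f sf → S.WeakSigReducible G f sf

/-- `f` is dominated by the signature `s` -/
def Dominated (f : S.F) (s : S.Sig) : Prop := ∃ s', S.IsSigned f s' ∧ S.ltE s' s

/-- `f` has an `s`-standard representation with respect to `G` -/
def HasSigStdRep (G : Finset (S.F × S.Sig)) (f : S.F) (s : S.Sig) : Prop :=
  ∃ (k : ℕ) (α : Fin k → K) (g : Fin k → S.F × S.Sig) (c : Fin k → S.Std),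
    (∀ i, α i ≠ 0) ∧ (∀ i, g i ∈ G) ∧
    f = ∑ i, α i • S.smulF (g i).1 (S.mono (c i)) ∧
    ∀ i, ∃ vg, S.IsLMF (g i).1 vg ∧ S.SmallCofactor vg.2 (c i) ∧
      ∃ sc, S.sigMul (g i).2 (c i) = some sc ∧ S.ltE sc s

/-- `NF` is a signed normal form function -/
def IsSigNFfun (NF : S.F → Finset (S.F × S.Sig) → S.Sig → S.F) : Prop :=
  ∀ f G s, (f = 0 → NF f G s = 0) ∧
    (NF f G s = 0 ∨ ¬ S.SigReducible G (NF f G s) s) ∧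
    S.HasSigStdRep G (f - NF f G s) s

/-- `s` is the leading monomial of an element of `ker(ev)` -/
def IsKerLM (s : S.Sig) : Prop := ∃ ft : S.E, ft ≠ 0 ∧ S.ev ft = 0 ∧ S.IsLME ft s

/-- there is a witness for the F5 criterion at signature `sp` -/
def F5Witness (G : Finset (S.F × S.Sig)) (sp : S.Sig) : Prop :=
  ∃ h ∈ G, ∃ c vh, S.IsLMF h.1 vh ∧ S.SmallCofactor vh.2 c ∧
    S.sigMul h.2 c = some sp ∧ ¬ S.SigReducible G (S.smulF h.1 (S.mono c)) sp

/-- `G` satisfies the F5 criterion: for each normal critical pair (of type T or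
type S) there is a witness with the same signature whose product is irreducible. -/
def SatisfiesF5 (G : Finset (S.F × S.Sig)) : Prop :=
  (∀ g ∈ G, ∀ (c : S.Std) (t : Option S.Std) (sc : S.Sig),
      (∃ vg, S.IsLMF g.1 vg ∧ S.IsMinimalToppling vg.2 c t) →
      ¬ S.SigReducible G g.1 g.2 → S.sigMul g.2 c = some sc → ¬ S.IsKerLM sc →
      S.F5Witness G sc) ∧
  (∀ g ∈ G, ∀ g' ∈ G, ∀ (c : S.Std) (sc : S.Sig),
      (∃ vg, S.IsLMF g.1 vg ∧ S.SmallCofactor vg.2 c ∧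
        ∃ (m' : MonP) (hm : m' ∈ S.Std), S.mul vg.2.1 c.1 = some m' ∧
          ∃ vg', S.IsLMF g'.1 vg' ∧ vg' = (vg.1, ⟨m', hm⟩)) →
      S.sigMul g.2 c = some sc → S.ltE g'.2 sc →
      ¬ S.SigReducible G g.1 g.2 → ¬ S.SigReducible G g'.1 g'.2 → ¬ S.IsKerLM sc →
      S.F5Witness G sc)

/-- the `τ`-layer of `M`: the set of `ev(ft)` with `LM(ft) ≤ τ` -/
def Layer (τ : S.Sig) : Set S.F :=
  {f | ∃ ft : S.E, S.ev ft = f ∧ (ft = 0 ∨ ∃ s, S.IsLME ft s ∧ S.leE s τ)}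

/-- the set `B_τ(M,G)` of products `poly(g)·c` with signature `≤ τ` that are
irreducible with respect to `G` -/
def Bset (G : Finset (S.F × S.Sig)) (τ : S.Sig) : Set S.F :=
  {f | ∃ g ∈ G, ∃ vg c sc, S.IsLMF g.1 vg ∧ S.SmallCofactor vg.2 c ∧
      S.sigMul g.2 c = some sc ∧ S.leE sc τ ∧
      ¬ S.SigReducible G (S.smulF g.1 (S.mono c)) sc ∧
      f = S.smulF g.1 (S.mono c)}

/-- the monomial ordering on `E` is a negative degree ordering -/
def NegDegOrdering : Prop := ∀ s t : S.Sig, S.deg s.2 < S.deg t.2 → S.ltE t s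

/-- the relations of `A` are at least quadratic (`ker ψ ⊆ P²`) -/
def Quadratic : Prop :=
  ∀ z : P, S.ψ z = 0 → ∀ m' ∈ (S.basisP.repr z).support, 2 ≤ S.deg m'

end PAQSigned


section NFHelpers

open Finset

variable {K : Type*} [Field K] {MonP : Type*} {P : Type*} {A : Type*}
  [Ring P] [Algebra K P] [Ring A] [Algebra K A]

namespace PAQModule

variable (S : PAQModule K MonP P A)

/- ## Order helpers -/

lemma lt_trans'' {a b c : MonP} (h1 : S.lt a b) (h2 : S.lt b c) : S.lt a c :=
  S.lt_sto.trans _ _ _ h1 h2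

lemma lt_irrefl'' (a : MonP) : ¬ S.lt a a := S.lt_sto.irrefl a

lemma lt_trichot (a b : MonP) : S.lt a b ∨ a = b ∨ S.lt b a := by have h := S.lt_sto.trichotomous a b; tauto

lemma ltF_trans'' {a b c} (h1 : S.ltF a b) (h2 : S.ltF b c) : S.ltF a c :=
  S.ltF_sto.trans _ _ _ h1 h2

lemma ltF_irrefl'' (a) : ¬ S.ltF a a := S.ltF_sto.irrefl a

lemma ltF_asymm' {a b} (h : S.ltF a b) : ¬ S.ltF b a :=
  fun h' => S.ltF_irrefl'' a (S.ltF_trans'' h h')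

lemma ltF_trichot (a b) : S.ltF a b ∨ a = b ∨ S.ltF b a := by have h := S.ltF_sto.trichotomous a b; tauto

/-- a max element of a nonempty finset w.r.t. a transitive trichotomous relation -/
lemma exists_rel_max {β : Type*} (r : β → β → Prop)
    (htri : ∀ a b, r a b ∨ a = b ∨ r b a) (htr : ∀ {a b c}, r a b → r b c → r a c)
    (s : Finset β) (hs : s.Nonempty) : ∃ m ∈ s, ∀ x ∈ s, x = m ∨ r x m := by
  classical
  induction s using Finset.induction_on with
  | empty => exact absurd hs (by simp)
  | @insert a t ha ih =>
    rcases t.eq_empty_or_nonempty with rfl | ht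
    · exact ⟨a, by simp, by simp⟩
    · obtain ⟨m, hm, hmax⟩ := ih ht
      rcases htri a m with hr | heq | hr
      · refine ⟨m, Finset.mem_insert_of_mem hm, ?_⟩
        intro x hx
        rcases Finset.mem_insert.mp hx with rfl | hx
        · exact Or.inr hr
        · exact hmax x hx
      · exact absurd (heq ▸ hm) ha
      · refine ⟨a, Finset.mem_insert_self a t, ?_⟩
        intro x hx
        rcases Finset.mem_insert.mp hx with rfl | hx
        · exact Or.inl rfl
        · rcases hmax x hx with rfl | hx2
          · exact Or.inr hr
          · exact Or.inr (htr hx2 hr)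

lemma descend_chain {α : Type*} (r : α → α → Prop) (htr : ∀ a b c, r a b → r b c → r a c)
    (h : ℕ → α) (hd : ∀ n, r (h (n+1)) (h n)) : ∀ {m n : ℕ}, m < n → r (h n) (h m) := by
  intro m n hmn
  induction n with
  | zero => omega
  | succ k ih =>
    rcases Nat.lt_succ_iff_lt_or_eq.mp hmn with h' | h'
    · exact htr _ _ _ (hd k) (ih h')
    · subst h'; exact hd m

/-- admissibility implies `ltF` is well-founded -/
lemma ltF_wf' (hadm : S.Admissible) : WellFounded S.ltF := by
  classical
  haveI : IsStrictOrder _ S.ltF := S.ltF_sto.toIsStrictOrder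
  rw [RelEmbedding.wellFounded_iff_isEmpty]
  constructor
  intro e
  set h : ℕ → Fin S.r × S.Std := fun n => e n with hh
  have hd : ∀ n, S.ltF (h (n+1)) (h n) := fun n => e.map_rel_iff.mpr (Nat.lt_succ_self n)
  obtain ⟨i, hi⟩ := Finite.exists_infinite_fiber (fun n => (h n).1)
  have hs : ((fun n => (h n).1) ⁻¹' {i}).Infinite := Set.infinite_coe_iff.mp hi
  have key : ∀ x : ℕ, ∃ y, y ∈ ((fun n => (h n).1) ⁻¹' {i}) ∧ x < y := by
    intro x
    obtain ⟨y, hy1, hy2⟩ := hs.exists_gt x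
    exact ⟨y, hy1, hy2⟩
  choose nxt hnxt hltn using key
  obtain ⟨x0, hx0⟩ := hs.nonempty
  set g : ℕ → ℕ := fun n => Nat.rec x0 (fun _ p => nxt p) n with hg
  have hgs : ∀ n, g n ∈ ((fun n => (h n).1) ⁻¹' {i}) := by
    intro n
    induction n with
    | zero => exact hx0
    | succ k _ => exact hnxt (g k)
  have hgmono : ∀ n, g n < g (n+1) := fun n => hltn (g n)
  have hfst : ∀ n, (h (g n)).1 = i := fun n => hgs n
  have hdesc : ∀ n, S.ltF (h (g (n+1))) (h (g n)) :=
    fun n => descend_chain S.ltF (fun _ _ _ => S.ltF_trans'') h hd (hgmono n)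
  refine hadm ⟨fun n => (h (g n)).2, fun n => ?_⟩
  have hq := hdesc n
  rcases S.lt_trichot ((h (g (n+1))).2 : S.Std).1 ((h (g n)).2 : S.Std).1 with hlt | heq | hlt
  · exact hlt
  · exfalso
    have : h (g (n+1)) = h (g n) := by
      have h2 : ((h (g (n+1))).2 : S.Std) = (h (g n)).2 := Subtype.ext heq
      exact Prod.ext ((hfst (n+1)).trans (hfst n).symm) h2
    rw [this] at hq
    exact S.ltF_irrefl'' _ hq
  · exfalso
    have hcompat := S.ltF_compat i _ _ hlt
    have h1 : h (g n) = (i, (h (g n)).2) := Prod.ext (hfst n) rfl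
    have h2 : h (g (n+1)) = (i, (h (g (n+1))).2) := Prod.ext (hfst (n+1)) rfl
    rw [h1, h2] at hq
    exact S.ltF_asymm' hq hcompat

/- ## Support and leading monomials -/

lemma suppF_finite' (f : S.F) : (S.suppF f).Finite := by
  have hsub : S.suppF f ⊆ ⋃ i : Fin S.r,
      (fun b => (i, b)) '' ((S.basisA.repr (f i)).support : Set S.Std) := by
    intro v hv
    refine Set.mem_iUnion.mpr ⟨v.1, ⟨v.2, ?_, rfl⟩⟩
    exact Finset.mem_coe.mpr (Finsupp.mem_support_iff.mpr hv)
  exact Set.Finite.subset (Set.finite_iUnion fun i => ((S.basisA.repr (f i)).support.finite_toSet).image _) hsub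

lemma ne_zero_of_isLMF {f : S.F} {v} (hv : S.IsLMF f v) : f ≠ 0 := by
  intro h0
  have := hv.1
  rw [h0] at this
  simp [PAQModule.suppF] at this

lemma exists_isLMF {f : S.F} (hf : f ≠ 0) : ∃ v, S.IsLMF f v := by
  classical
  have hfin := S.suppF_finite' f
  have hne : (S.suppF f).Nonempty := by
    by_contra h
    rw [Set.not_nonempty_iff_eq_empty] at h
    apply hf
    funext i
    show f i = (0 : A)
    rw [← (S.basisA.repr.map_eq_zero_iff)]
    ext b
    have : (i, b) ∉ S.suppF f := by rw [h]; exact Set.notMem_empty _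
    simpa [PAQModule.suppF] using this
  obtain ⟨m, hm, hmax⟩ := exists_rel_max S.ltF S.ltF_trichot (fun {a b c} => S.ltF_trans'')
    hfin.toFinset (by rwa [Set.Finite.toFinset_nonempty])
  refine ⟨m, hfin.mem_toFinset.mp hm, fun w hw => hmax w (hfin.mem_toFinset.mpr hw)⟩

lemma isLMF_unique {f : S.F} {v w} (hv : S.IsLMF f v) (hw : S.IsLMF f w) : v = w := by
  rcases hw.2 v hv.1 with h | h
  · exact h
  · rcases hv.2 w hw.1 with h' | h'
    · exact h'.symm
    · exact absurd h' (S.ltF_asymm' h)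

lemma exists_isLMA {x : A} (hx : x ≠ 0) : ∃ b, S.IsLMA x b := by
  classical
  have hne : (S.basisA.repr x).support.Nonempty := by
    rw [Finsupp.support_nonempty_iff]
    simpa using hx
  obtain ⟨m, hm, hmax⟩ := exists_rel_max (fun (a b : S.Std) => S.lt a.1 b.1)
    (fun a b => by
      rcases S.lt_trichot a.1 b.1 with h | h | h
      · exact Or.inl h
      · exact Or.inr (Or.inl (Subtype.ext h))
      · exact Or.inr (Or.inr h))
    (fun {a b c} => S.lt_trans'') _ hne
  exact ⟨m, hm, hmax⟩

/- ## Multiplication and representations -/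

lemma repr_mul_expand_left {ι V : Type*} [Ring V] [Algebra K V] (bas : Module.Basis ι K V)
    (x y : V) (t : ι) :
    bas.repr (x * y) t = ∑ b ∈ (bas.repr x).support, bas.repr x b * bas.repr (bas b * y) t := by
  classical
  conv_lhs => rw [← bas.linearCombination_repr x]
  rw [Finsupp.linearCombination_apply, Finsupp.sum, Finset.sum_mul, map_sum, Finset.sum_apply']
  refine Finset.sum_congr rfl fun b hb => ?_
  rw [smul_mul_assoc, map_smul, Finsupp.smul_apply, smul_eq_mul]

lemma repr_mul_expand_right {ι V : Type*} [Ring V] [Algebra K V] (bas : Module.Basis ι K V)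
    (x y : V) (t : ι) :
    bas.repr (x * y) t = ∑ b ∈ (bas.repr y).support, bas.repr y b * bas.repr (x * bas b) t := by
  classical
  conv_lhs => rw [← bas.linearCombination_repr y]
  rw [Finsupp.linearCombination_apply, Finsupp.sum, Finset.mul_sum, map_sum, Finset.sum_apply']
  refine Finset.sum_congr rfl fun b hb => ?_
  rw [mul_smul_comm, map_smul, Finsupp.smul_apply, smul_eq_mul]

lemma mono_eq_basisA (c : S.Std) : S.mono c = S.basisA c := (S.basisA_eq c).symm

lemma basisA_mul_mono (b c : S.Std) : S.basisA b * S.mono c = S.mulA b c := by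
  rw [S.basisA_eq]
  show S.ψ (S.basisP b.1) * S.ψ (S.basisP c.1) = _
  rw [← map_mul, S.basisP_mul]
  unfold PAQBasis.mulA
  cases h : S.mul b.1 c.1 with
  | none => simp
  | some m => simp

lemma repr_smulF_apply (g : S.F) (c : S.Std) (i : Fin S.r) (t : S.Std) :
    S.basisA.repr ((S.smulF g (S.mono c)) i) t =
      ∑ b ∈ (S.basisA.repr (g i)).support,
        S.basisA.repr (g i) b * S.basisA.repr (S.mulA b c) t := by
  show S.basisA.repr (g i * S.mono c) t = _
  rw [repr_mul_expand_left S.basisA]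
  exact Finset.sum_congr rfl fun b _ => by rw [S.basisA_mul_mono]

lemma repr_basisP_mul (b : MonP) (z : P) (x : MonP) :
    S.basisP.repr (S.basisP b * z) x =
      ∑ n ∈ (S.basisP.repr z).support,
        S.basisP.repr z n * S.basisP.repr ((S.mul b n).elim 0 (fun m => S.basisP m)) x := by
  rw [repr_mul_expand_right S.basisP]
  exact Finset.sum_congr rfl fun n _ => by rw [S.basisP_mul]

lemma elim_ne_zero {o : Option MonP} {x : MonP}
    (h : S.basisP.repr (o.elim 0 (fun m => S.basisP m)) x ≠ 0) : o = some x := by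
  cases o with
  | none => simp at h
  | some m =>
    simp only [Option.elim, S.basisP.repr_self] at h
    by_contra hne
    have hxm : m ≠ x := fun h' => hne (by rw [h'])
    exact h (Finsupp.single_eq_of_ne (Ne.symm hxm))

lemma mulA_of_std {b c : S.Std} {m : MonP} (h : S.mul b.1 c.1 = some m) (hm : m ∈ S.Std) :
    S.mulA b c = S.basisA ⟨m, hm⟩ := by
  unfold PAQBasis.mulA
  rw [h, S.basisA_eq]
  rfl

lemma smallCofactor_of_std {b c : S.Std} {m : MonP} (h : S.mul b.1 c.1 = some m)
    (hm : m ∈ S.Std) : S.SmallCofactor b c := by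
  rintro ⟨t, ht⟩
  have hA : S.mulA b c = S.basisA ⟨m, hm⟩ := S.mulA_of_std h hm
  rcases ht with ⟨h0, -⟩ | ⟨t', -, hlm, hndvd⟩
  · exact S.basisA.ne_zero ⟨m, hm⟩ (hA ▸ h0)
  · have ht' : t' = ⟨m, hm⟩ := by
      have hsupp := hlm.1
      rw [hA, S.basisA.repr_self] at hsupp
      simpa [Finsupp.support_single_ne_zero _ (one_ne_zero (α := K))] using hsupp
    exact hndvd (by rw [ht']; exact ⟨c.1, h⟩)

/-- a monomial dividing a standard monomial from the right is standard -/
lemma cofactor_mem_std {b w : S.Std} {m' : MonP}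
    (h : S.mul b.1 m' = some w.1) : m' ∈ S.Std := by
  by_contra hm'
  have hm'2 : ∃ z : P, z ≠ 0 ∧ S.ψ z = 0 ∧ S.IsLMP z m' := by
    simpa [PathAlgQuot.Std] using hm'
  obtain ⟨z, hz0, hzψ, hzm⟩ := hm'2
  set w' : P := S.basisP b.1 * z with hw'
  have hψ : S.ψ w' = 0 := by rw [hw', map_mul, hzψ, mul_zero]
  have hreprw : ∀ x, S.basisP.repr w' x =
      ∑ n ∈ (S.basisP.repr z).support,
        S.basisP.repr z n * S.basisP.repr ((S.mul b.1 n).elim 0 (fun m => S.basisP m)) x :=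
    fun x => S.repr_basisP_mul b.1 z x
  have hlead : S.basisP.repr w' w.1 = S.basisP.repr z m' := by
    rw [hreprw]
    rw [Finset.sum_eq_single_of_mem m' hzm.1]
    · rw [h]
      simp [S.basisP.repr_self]
    · intro n hn hne
      rcases hzm.2 n hn with rfl | hlt
      · exact absurd rfl hne
      · by_cases hz : S.basisP.repr ((S.mul b.1 n).elim 0 (fun m => S.basisP m)) w.1 = 0
        · rw [hz, mul_zero]
        · exfalso
          have hsome := S.elim_ne_zero hz
          exact S.lt_irrefl'' w.1 (S.lt_mul_left hlt hsome h)
  have hlne : S.basisP.repr z m' ≠ 0 := Finsupp.mem_support_iff.mp hzm.1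
  have hw0 : w' ≠ 0 := by
    intro h0
    rw [h0] at hlead
    simp at hlead
    exact hlne hlead.symm
  have hLMP : S.IsLMP w' w.1 := by
    constructor
    · rw [Finsupp.mem_support_iff, hlead]; exact hlne
    · intro x hx
      rw [Finsupp.mem_support_iff, hreprw] at hx
      obtain ⟨n, hn, hterm⟩ := Finset.exists_ne_zero_of_sum_ne_zero hx
      have hz : S.basisP.repr ((S.mul b.1 n).elim 0 (fun m => S.basisP m)) x ≠ 0 :=
        fun h0 => hterm (by rw [h0, mul_zero])
      have hsome := S.elim_ne_zero hz
      rcases hzm.2 n hn with rfl | hlt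
      · left
        rw [h] at hsome
        exact (Option.some_injective _ hsome.symm)
      · right
        exact S.lt_mul_left hlt hsome h
  exact w.2 ⟨w', hw0, hψ, hLMP⟩

/- ## Leading monomial of `g·c` for a small cofactor `c` -/

lemma isLMF_smul_mono {g : S.F} {vg : Fin S.r × S.Std} (hg : S.IsLMF g vg)
    {c : S.Std} {m : MonP} (hm : m ∈ S.Std) (hsc : S.SmallCofactor vg.2 c)
    (hmul : S.mul vg.2.1 c.1 = some m) :
    S.IsLMF (S.smulF g (S.mono c)) (vg.1, ⟨m, hm⟩) ∧
      S.basisA.repr ((S.smulF g (S.mono c)) vg.1) ⟨m, hm⟩ = S.basisA.repr (g vg.1) vg.2 := by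
  classical
  have hbound : ∀ (j : Fin S.r) (b : S.Std), S.basisA.repr (g j) b ≠ 0 → (j, b) ≠ vg →
      ∀ t : S.Std, S.basisA.repr (S.mulA b c) t ≠ 0 → S.ltF (j, t) (vg.1, ⟨m, hm⟩) := by
    intro j b hmem hne t ht
    have hlt : S.ltF (j, b) (vg.1, vg.2) := by
      rcases hg.2 (j, b) hmem with h | h
      · exact absurd h hne
      · exact h
    rcases S.ltF_mul vg.1 j vg.2 b c m hm hsc hmul hlt with h0 | hall
    · exact absurd (by rw [h0]; simp) ht
    · have hA0 : S.mulA b c ≠ 0 := fun h0 => ht (by rw [h0]; simp)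
      obtain ⟨t', hlma⟩ := S.exists_isLMA hA0
      have hkey := hall t' hlma
      rcases hlma.2 t (Finsupp.mem_support_iff.mpr ht) with rfl | hlt2
      · exact hkey
      · exact S.ltF_trans'' (S.ltF_compat j _ _ hlt2) hkey
  have hvg2mem : vg.2 ∈ (S.basisA.repr (g vg.1)).support := Finsupp.mem_support_iff.mpr hg.1
  have hLC : S.basisA.repr ((S.smulF g (S.mono c)) vg.1) ⟨m, hm⟩ =
      S.basisA.repr (g vg.1) vg.2 := by
    rw [S.repr_smulF_apply]
    rw [Finset.sum_eq_single_of_mem vg.2 hvg2mem]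
    · rw [S.mulA_of_std hmul hm, S.basisA.repr_self, Finsupp.single_eq_same, mul_one]
    · intro b hb hne
      by_cases h0 : S.basisA.repr (S.mulA b c) ⟨m, hm⟩ = 0
      · rw [h0, mul_zero]
      · exact absurd (hbound vg.1 b (Finsupp.mem_support_iff.mp hb)
          (fun he => hne (congrArg Prod.snd he)) ⟨m, hm⟩ h0) (S.ltF_irrefl'' _)
  have hmem : (vg.1, (⟨m, hm⟩ : S.Std)) ∈ S.suppF (S.smulF g (S.mono c)) := by
    show S.basisA.repr ((S.smulF g (S.mono c)) vg.1) ⟨m, hm⟩ ≠ 0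
    rw [hLC]; exact hg.1
  refine ⟨⟨hmem, ?_⟩, hLC⟩
  intro w hw
  have hw' : S.basisA.repr ((S.smulF g (S.mono c)) w.1) w.2 ≠ 0 := hw
  rw [S.repr_smulF_apply] at hw'
  obtain ⟨b, hb, hterm⟩ := Finset.exists_ne_zero_of_sum_ne_zero hw'
  have h0 : S.basisA.repr (S.mulA b c) w.2 ≠ 0 := fun h => hterm (by rw [h, mul_zero])
  by_cases hcase : (w.1, b) = vg
  · left
    have hb1 : w.1 = vg.1 := by rw [← hcase]
    have hb2 : b = vg.2 := by rw [← hcase]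
    rw [hb2, S.mulA_of_std hmul hm, S.basisA.repr_self] at h0
    have hw2 : w.2 = ⟨m, hm⟩ := by
      by_contra hne
      exact h0 (Finsupp.single_eq_of_ne hne)
    exact Prod.ext hb1 hw2
  · exact Or.inr (hbound w.1 b (Finsupp.mem_support_iff.mp hb) hcase w.2 h0)

/- ## Pointwise representation lemmas -/

lemma repr_sub_apply (f f' : S.F) (i : Fin S.r) (t : S.Std) :
    S.basisA.repr ((f - f') i) t = S.basisA.repr (f i) t - S.basisA.repr (f' i) t := by
  show S.basisA.repr (f i - f' i) t = _
  rw [map_sub]; rfl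

lemma repr_add_apply (f f' : S.F) (i : Fin S.r) (t : S.Std) :
    S.basisA.repr ((f + f') i) t = S.basisA.repr (f i) t + S.basisA.repr (f' i) t := by
  show S.basisA.repr (f i + f' i) t = _
  rw [map_add]; rfl

lemma repr_smul_apply (α : K) (f : S.F) (i : Fin S.r) (t : S.Std) :
    S.basisA.repr ((α • f) i) t = α * S.basisA.repr (f i) t := by
  show S.basisA.repr (α • f i) t = _
  rw [map_smul, Finsupp.smul_apply, smul_eq_mul]

lemma mem_suppF_add {f f' : S.F} {w} (hw : w ∈ S.suppF (f + f')) :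
    w ∈ S.suppF f ∨ w ∈ S.suppF f' := by
  by_contra hc
  push_neg at hc
  have h1 : S.basisA.repr (f w.1) w.2 = 0 := not_not.mp hc.1
  have h2 : S.basisA.repr (f' w.1) w.2 = 0 := not_not.mp hc.2
  exact hw (by rw [S.repr_add_apply, h1, h2, add_zero])

lemma mem_suppF_sub {f f' : S.F} {w} (hw : w ∈ S.suppF (f - f')) :
    w ∈ S.suppF f ∨ w ∈ S.suppF f' := by
  by_contra hc
  push_neg at hc
  have h1 : S.basisA.repr (f w.1) w.2 = 0 := not_not.mp hc.1
  have h2 : S.basisA.repr (f' w.1) w.2 = 0 := not_not.mp hc.2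
  exact hw (by rw [S.repr_sub_apply, h1, h2, sub_zero])

lemma isLMF_smul_scalar {α : K} (hα : α ≠ 0) {f : S.F} {v} (hv : S.IsLMF f v) :
    S.IsLMF (α • f) v := by
  have hsupp : ∀ w, w ∈ S.suppF (α • f) ↔ w ∈ S.suppF f := by
    intro w
    show S.basisA.repr ((α • f) w.1) w.2 ≠ 0 ↔ S.basisA.repr (f w.1) w.2 ≠ 0
    rw [S.repr_smul_apply]
    constructor
    · intro h h0; exact h (by rw [h0, mul_zero])
    · intro h; exact mul_ne_zero hα h
  exact ⟨(hsupp v).mpr hv.1, fun w hw => hv.2 w ((hsupp w).mp hw)⟩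

/- ## Reduction steps -/

lemma exists_redStep (G : Finset S.F) {f : S.F} {v} (hv : S.IsLMF f v)
    (hred : S.Reducible G f) : ∃ f', S.RedStep G f f' := by
  obtain ⟨g, hgG, vg, vf, hLMg, hLMf, hdvd⟩ := hred
  obtain ⟨hij, m', hm'⟩ := hdvd
  have hstd : m' ∈ S.Std := S.cofactor_mem_std hm'
  exact ⟨_, g, hgG, vg, vf, hLMg, hLMf, ⟨m', hstd⟩,
    S.smallCofactor_of_std hm' vf.2.2, hij, hm', rfl⟩

lemma redStep_spec (G : Finset S.F) {f f' : S.F} {v} (hv : S.IsLMF f v)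
    (h : S.RedStep G f f') :
    (∀ w ∈ S.suppF f', S.ltF w v) ∧
    ∃ α : K, α ≠ 0 ∧ ∃ g ∈ G, ∃ c : S.Std,
      f - f' = α • S.smulF g (S.mono c) ∧ S.IsLMF (S.smulF g (S.mono c)) v ∧
      ∃ vg, S.IsLMF g vg ∧ S.SmallCofactor vg.2 c ∧
        S.mul vg.2.1 c.1 = some v.2.1 ∧ vg.1 = v.1 := by
  obtain ⟨g, hgG, vg, vf, hLMg, hLMf, c, hsc, hij, hmulc, heq⟩ := h
  have hvf : vf = v := S.isLMF_unique hLMf hv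
  subst hvf
  have hL1 := S.isLMF_smul_mono hLMg vf.2.2 hsc hmulc
  have hEQ : ((vg.1, ⟨vf.2.1, vf.2.2⟩) : Fin S.r × S.Std) = vf := Prod.ext hij rfl
  have hLMgc : S.IsLMF (S.smulF g (S.mono c)) vf := by rw [← hEQ]; exact hL1.1
  have hLCgc : S.basisA.repr ((S.smulF g (S.mono c)) vf.1) vf.2 =
      S.basisA.repr (g vg.1) vg.2 := by
    rw [← hij]
    exact hL1.2
  have hLCg0 : S.basisA.repr (g vg.1) vg.2 ≠ 0 := hLMg.1
  have hLCf0 : S.basisA.repr (f vf.1) vf.2 ≠ 0 := hv.1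
  have hα : S.LCF f vf * (S.LCF g vg)⁻¹ ≠ 0 := mul_ne_zero hLCf0 (inv_ne_zero hLCg0)
  have hsub : f - f' = (S.LCF f vf * (S.LCF g vg)⁻¹) • S.smulF g (S.mono c) := by
    rw [heq, sub_sub_cancel]
  have hzero : S.basisA.repr (f' vf.1) vf.2 = 0 := by
    rw [heq, S.repr_sub_apply, S.repr_smul_apply, hLCgc]
    show S.basisA.repr (f vf.1) vf.2 -
      S.basisA.repr (f vf.1) vf.2 * (S.basisA.repr (g vg.1) vg.2)⁻¹ *
        S.basisA.repr (g vg.1) vg.2 = 0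
    rw [mul_assoc, inv_mul_cancel₀ hLCg0, mul_one, sub_self]
  refine ⟨?_, S.LCF f vf * (S.LCF g vg)⁻¹, hα, g, hgG, c, hsub, hLMgc,
    vg, hLMg, hsc, hmulc, hij⟩
  intro w hw
  have hw' : w ∈ S.suppF (f - (S.LCF f vf * (S.LCF g vg)⁻¹) • S.smulF g (S.mono c)) := by
    rw [← heq]; exact hw
  have hcase : w = vf ∨ S.ltF w vf := by
    rcases S.mem_suppF_sub hw' with h1 | h1
    · exact hv.2 w h1
    · exact (S.isLMF_smul_scalar hα hLMgc).2 w h1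
  rcases hcase with rfl | hlt
  · exact absurd hzero hw
  · exact hlt

/- ## Standard representations -/

/-- a standard representation all of whose terms have leading monomial `≤ v` -/
def GoodRep (G : Finset S.F) (h : S.F) (v : Fin S.r × S.Std) : Prop :=
  ∃ (k : ℕ) (α : Fin k → K) (g : Fin k → S.F) (c : Fin k → S.Std),
    (∀ i, α i ≠ 0) ∧ (∀ i, g i ∈ G) ∧
    h = ∑ i, α i • S.smulF (g i) (S.mono (c i)) ∧
    ∀ i, ∃ vg, S.IsLMF (g i) vg ∧ S.SmallCofactor vg.2 (c i) ∧
      ∃ (m : MonP) (hm : m ∈ S.Std), S.mul vg.2.1 (c i).1 = some m ∧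
        S.IsLMF (S.smulF (g i) (S.mono (c i))) (vg.1, ⟨m, hm⟩) ∧
        S.leF (vg.1, ⟨m, hm⟩) v

lemma hasStdRep_zero (G : Finset S.F) : S.HasStdRep G 0 :=
  ⟨0, fun i => i.elim0, fun i => i.elim0, fun i => i.elim0, fun i => i.elim0,
    fun i => i.elim0, by simp, fun i => i.elim0⟩

lemma hasStdRep_of_goodRep (G : Finset S.F) {h : S.F} {v} (hLM : S.IsLMF h v)
    (hrep : S.GoodRep G h v) : S.HasStdRep G h := by
  obtain ⟨k, αs, gs, cs, h1, h2, h3, h4⟩ := hrep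
  refine ⟨k, αs, gs, cs, h1, h2, h3, fun i => ?_⟩
  obtain ⟨vg, ha, hb, m, hm, hc, hd, he⟩ := h4 i
  refine ⟨vg, ha, hb, m, hm, hc, hd, fun vf hvf => ?_⟩
  rwa [S.isLMF_unique hvf hLM]

lemma goodRep_single (G : Finset S.F) {α : K} (hα : α ≠ 0) {g : S.F} (hgG : g ∈ G)
    {c : S.Std} {vg} (hLMg : S.IsLMF g vg) (hsc : S.SmallCofactor vg.2 c)
    {m : MonP} {hm : m ∈ S.Std} (hmul : S.mul vg.2.1 c.1 = some m)
    (hLM : S.IsLMF (S.smulF g (S.mono c)) (vg.1, ⟨m, hm⟩))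
    {v} (hle : S.leF (vg.1, ⟨m, hm⟩) v) :
    S.GoodRep G (α • S.smulF g (S.mono c)) v :=
  ⟨1, fun _ => α, fun _ => g, fun _ => c, fun _ => hα, fun _ => hgG,
    by rw [Fin.sum_univ_one], fun _ => ⟨vg, hLMg, hsc, m, hm, hmul, hLM, hle⟩⟩

lemma goodRep_cons (G : Finset S.F) {h : S.F} {v v' : Fin S.r × S.Std} (hlt : S.ltF v' v)
    (hrep : S.GoodRep G h v') {α : K} (hα : α ≠ 0) {g : S.F} (hgG : g ∈ G) {c : S.Std}
    {vg} (hLMg : S.IsLMF g vg) (hsc : S.SmallCofactor vg.2 c) {m : MonP} {hm : m ∈ S.Std}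
    (hmul : S.mul vg.2.1 c.1 = some m)
    (hLM : S.IsLMF (S.smulF g (S.mono c)) (vg.1, ⟨m, hm⟩))
    (hle : S.leF (vg.1, ⟨m, hm⟩) v) :
    S.GoodRep G (α • S.smulF g (S.mono c) + h) v := by
  obtain ⟨k, αs, gs, cs, h1, h2, h3, h4⟩ := hrep
  refine ⟨k + 1, Fin.cons α αs, Fin.cons g gs, Fin.cons c cs, ?_, ?_, ?_, ?_⟩
  · intro i
    induction i using Fin.cases with
    | zero => simpa using hα
    | succ j => simpa using h1 j
  · intro i
    induction i using Fin.cases with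
    | zero => simpa using hgG
    | succ j => simpa using h2 j
  · rw [Fin.sum_univ_succ]
    simp only [Fin.cons_zero, Fin.cons_succ]
    rw [← h3]
  · intro i
    induction i using Fin.cases with
    | zero =>
      simp only [Fin.cons_zero]
      exact ⟨vg, hLMg, hsc, m, hm, hmul, hLM, hle⟩
    | succ j =>
      simp only [Fin.cons_succ]
      obtain ⟨vg', ha, hb, m', hm', hc, hd, he⟩ := h4 j
      refine ⟨vg', ha, hb, m', hm', hc, hd, ?_⟩
      rcases he with heq | hlt2
      · exact Or.inr (heq ▸ hlt)
      · exact Or.inr (S.ltF_trans'' hlt2 hlt)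

/- ## Main induction -/

lemma reduce_aux (hadm : S.Admissible) (G : Finset S.F) :
    ∀ v : Fin S.r × S.Std, ∀ f : S.F, S.IsLMF f v →
      ∃ nf, Relation.ReflTransGen (S.RedStep G) f nf ∧ S.Irreducible' G nf ∧
        (f = nf ∨ (S.IsLMF (f - nf) v ∧ S.GoodRep G (f - nf) v)) := by
  intro v
  refine (S.ltF_wf' hadm).induction
    (C := fun v => ∀ f : S.F, S.IsLMF f v →
      ∃ nf, Relation.ReflTransGen (S.RedStep G) f nf ∧ S.Irreducible' G nf ∧
        (f = nf ∨ (S.IsLMF (f - nf) v ∧ S.GoodRep G (f - nf) v))) v ?_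
  intro v IH f hf
  by_cases hred : S.Reducible G f
  case neg => exact ⟨f, Relation.ReflTransGen.refl, Or.inr hred, Or.inl rfl⟩
  case pos =>
  obtain ⟨f', hstep⟩ := S.exists_redStep G hf hred
  obtain ⟨hsupp', α, hα, g, hgG, c, hsub, hLMgc, vg, hLMg, hsc, hmul, hij⟩ :=
    S.redStep_spec G hf hstep
  have hEQ : ((vg.1, ⟨v.2.1, v.2.2⟩) : Fin S.r × S.Std) = v := Prod.ext hij rfl
  have hLM' : S.IsLMF (S.smulF g (S.mono c)) (vg.1, ⟨v.2.1, v.2.2⟩) := by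
    rw [hEQ]; exact hLMgc
  have hgood1 : S.GoodRep G (α • S.smulF g (S.mono c)) v :=
    S.goodRep_single G hα hgG hLMg hsc hmul hLM' (Or.inl hEQ)
  have hLMα : S.IsLMF (α • S.smulF g (S.mono c)) v := S.isLMF_smul_scalar hα hLMgc
  by_cases hf'0 : f' = 0
  · refine ⟨f', Relation.ReflTransGen.single hstep, Or.inl hf'0, Or.inr ⟨?_, ?_⟩⟩
    · rw [hsub]; exact hLMα
    · rw [hsub]; exact hgood1
  · obtain ⟨v', hv'⟩ := S.exists_isLMF hf'0
    have hlt : S.ltF v' v := hsupp' v' hv'.1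
    obtain ⟨nf, hchain, hirr, hrest⟩ := IH v' hlt f' hv'
    refine ⟨nf, Relation.ReflTransGen.head hstep hchain, hirr, Or.inr ?_⟩
    rcases hrest with rfl | ⟨hLM2, hrep2⟩
    · exact ⟨by rw [hsub]; exact hLMα, by rw [hsub]; exact hgood1⟩
    · have hsplit : f - nf = α • S.smulF g (S.mono c) + (f' - nf) := by
        rw [← hsub]; abel
      constructor
      · rw [hsplit]
        constructor
        · show S.basisA.repr ((α • S.smulF g (S.mono c) + (f' - nf)) v.1) v.2 ≠ 0
          rw [S.repr_add_apply]
          have h2 : S.basisA.repr ((f' - nf) v.1) v.2 = 0 := by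
            by_contra hz
            rcases hLM2.2 v hz with rfl | h3
            · exact S.ltF_irrefl'' _ hlt
            · exact S.ltF_asymm' hlt h3
          rw [h2, add_zero]
          exact hLMα.1
        · intro w hw
          rcases S.mem_suppF_add hw with h1 | h1
          · exact hLMα.2 w h1
          · rcases hLM2.2 w h1 with rfl | h3
            · exact Or.inr hlt
            · exact Or.inr (S.ltF_trans'' h3 hlt)
      · rw [hsplit]
        exact S.goodRep_cons G hlt hrep2 hα hgG hLMg hsc hmul hLM' (Or.inl hEQ)

end PAQModule

end NFHelpers


section Statements

variable {K : Type*} [Field K] {MonP : Type*} {P : Type*} {A : Type*}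
  [Ring P] [Algebra K P] [Ring A] [Algebra K A]

/-- for an admissible ordering, the reduction algorithm terminates
and computes a normal form. -/
theorem normal_form_algorithm (S : PAQModule K MonP P A) (hadm : S.Admissible)
    (f : S.F) (G : Finset S.F) (hG : ∀ g ∈ G, g ≠ (0 : S.F)) :
    (¬ ∃ h : ℕ → S.F, h 0 = f ∧ ∀ n, S.RedStep G (h n) (h (n + 1))) ∧
    ∃ nf, Relation.ReflTransGen (S.RedStep G) f nf ∧
      S.Irreducible' G nf ∧ S.HasStdRep G (f - nf) := by
  constructor
  · rintro ⟨h, h0, hsteps⟩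
    have hLM : ∀ n, ∃ vf, S.IsLMF (h n) vf := by
      intro n
      obtain ⟨g, hgG, vg, vf, hLMg, hLMf, _⟩ := hsteps n
      exact ⟨vf, hLMf⟩
    choose vseq hvseq using hLM
    have hdesc : ∀ n, S.ltF (vseq (n+1)) (vseq n) := fun n =>
      (S.redStep_spec G (hvseq n) (hsteps n)).1 _ (hvseq (n+1)).1
    have hacc : ∀ x, Acc S.ltF x → ∀ n, vseq n ≠ x := by
      intro x hx
      induction hx with
      | intro x _ ih =>
        intro n hn
        exact ih (vseq (n+1)) (hn ▸ hdesc n) (n+1) rfl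
    exact hacc (vseq 0) ((S.ltF_wf' hadm).apply _) 0 rfl
  · by_cases hf0 : f = 0
    · exact ⟨f, Relation.ReflTransGen.refl, Or.inl hf0,
        by rw [sub_self]; exact S.hasStdRep_zero G⟩
    · obtain ⟨v, hv⟩ := S.exists_isLMF hf0
      obtain ⟨nf, hchain, hirr, hrest⟩ := S.reduce_aux hadm G v f hv
      refine ⟨nf, hchain, hirr, ?_⟩
      rcases hrest with rfl | ⟨hLM, hrep⟩
      · rw [sub_self]; exact S.hasStdRep_zero G
      · exact S.hasStdRep_of_goodRep G hLM hrep

end Statements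
end

section
/- If G is a standard basis of a submodule M of a free right-A module F, then every element of M has a standard representation with respect to G; in particular G generates M as a right-A module, and f ∈ M if and only if the normal form of f with respect to G is zero. -/
/-!  An abstract framework for the standard-basis theory of right modules over
path algebra quotients, following S. King, "A non-commutative F5 algorithm with
an application to the computation of Loewy layers".

`PathAlgQuot` bundles: the monomials (directed paths) of a path algebra `P`
with their partial concatenation product, a monomial ordering, `P` itself with
its monomial basis, and a quotient algebra `A` of `P` via `ψ`. -/

open scoped BigOperators

section Statements

variable {K : Type*} [Field K] {MonP : Type*} {P : Type*} {A : Type*}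
  [Ring P] [Algebra K P] [Ring A] [Algebra K A]

lemma sum_mem_of_isSubmodule {r : ℕ} {N : Set (Fin r → A)}
    (hN : RightMod.IsSubmodule K A N) {k : ℕ} (h : Fin k → (Fin r → A))
    (hh : ∀ i, h i ∈ N) : ∑ i, h i ∈ N := by
  induction k with
  | zero => simpa using hN.1
  | succ n ih =>
      rw [Fin.sum_univ_succ]
      exact hN.2.1 _ _ (hh 0) (ih _ (fun i => hh i.succ))

lemma mem_of_hasStdRep (S : PAQModule K MonP P A) {N : Set S.F}
    (hN : RightMod.IsSubmodule K A N) {G : Finset S.F} (hG : ↑G ⊆ N)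
    {f : S.F} (hf : S.HasStdRep G f) : f ∈ N := by
  obtain ⟨k, α, g, c, -, hgG, hsum, -⟩ := hf
  rw [hsum]
  refine sum_mem_of_isSubmodule hN _ (fun i => ?_)
  exact hN.2.2.1 (α i) _ (hN.2.2.2 _ (hG (hgG i)) _)

lemma sub_mem_of_isSubmodule {r : ℕ} {N : Set (Fin r → A)}
    (hN : RightMod.IsSubmodule K A N) {f g : Fin r → A}
    (hf : f ∈ N) (hg : g ∈ N) : f - g ∈ N := by
  have : f - g = f + (-1 : K) • g := by
    simp [sub_eq_add_neg, neg_one_smul]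
  rw [this]
  exact hN.2.1 _ _ hf (hN.2.2.1 (-1 : K) _ hg)

/-- a standard basis gives standard representations of all elements
of `M`, generates `M`, and detects membership via normal forms. -/
theorem std_basis_props (S : PAQModule K MonP P A) (hadm : S.Admissible)
    (M : Set S.F) (hM : RightMod.IsSubmodule K A M)
    (G : Finset S.F) (hGstd : S.IsStdBasis G M)
    (NF : S.F → Finset S.F → S.F) (hNF : S.IsNFfun NF) :
    (∀ f ∈ M, S.HasStdRep G f) ∧
    RightMod.Generates K A (↑G) M ∧
    ∀ f : S.F, f ∈ M ↔ NF f G = 0 := by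
  have hGM : ↑G ⊆ M := fun x hx => (hGstd.1 hx).1
  have key : ∀ f ∈ M, NF f G = 0 := by
    intro f hf
    obtain ⟨-, hirr, hrep⟩ := hNF f G
    have h1 : f - NF f G ∈ M := mem_of_hasStdRep S hM hGM hrep
    have h2 : NF f G ∈ M := by
      have : f - (f - NF f G) = NF f G := sub_sub_cancel f (NF f G)
      rw [← this]
      exact sub_mem_of_isSubmodule hM hf h1
    rcases hirr with h0 | hnred
    · exact h0
    · by_contra hne
      exact hnred (hGstd.2 _ h2 hne)
  have stdrep : ∀ f ∈ M, S.HasStdRep G f := by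
    intro f hf
    have := (hNF f G).2.2
    rwa [key f hf, sub_zero] at this
  refine ⟨stdrep, ⟨hGM, fun N hN hGN f hf => mem_of_hasStdRep S hN hGN (stdrep f hf)⟩,
    fun f => ⟨key f, fun h0 => ?_⟩⟩
  have := (hNF f G).2.2
  rw [h0, sub_zero] at this
  exact mem_of_hasStdRep S hM hGM this

end Statements
end

section
/- If G is a finite subset of M∖{0} and f ∈ M∖{0} is reducible with respect to G, then f is reducible with respect to {NF(g, G∖{g})} ∪ G∖{g} for every g ∈ G (interpreting the set without the normal form if it is zero). -/
/-!  An abstract framework for the standard-basis theory of right modules over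
path algebra quotients, following S. King, "A non-commutative F5 algorithm with
an application to the computation of Loewy layers".

`PathAlgQuot` bundles: the monomials (directed paths) of a path algebra `P`
with their partial concatenation product, a monomial ordering, `P` itself with
its monomial basis, and a quotient algebra `A` of `P` via `ψ`. -/

open scoped BigOperators

section Statements

variable {K : Type*} [Field K] {MonP : Type*} {P : Type*} {A : Type*}
  [Ring P] [Algebra K P] [Ring A] [Algebra K A]

private lemma exists_greatest_aux {α : Type*} (r : α → α → Prop) (hr : IsStrictTotalOrder α r)
    (s : Finset α) : s.Nonempty → ∃ a ∈ s, ∀ b ∈ s, b = a ∨ r b a := by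
  haveI := hr
  classical
  induction s using Finset.induction_on with
  | empty => intro hs; simp at hs
  | @insert x s hx ih =>
    intro _
    rcases s.eq_empty_or_nonempty with h | h
    · subst h
      exact ⟨x, by simp, by simp⟩
    · obtain ⟨a, ha, hmax⟩ := ih h
      rcases trichotomous_of r x a with hlt | heq | hgt
      · refine ⟨a, Finset.mem_insert_of_mem ha, ?_⟩
        intro b hb
        rcases Finset.mem_insert.1 hb with rfl | hb
        · exact Or.inr hlt
        · exact hmax b hb
      · refine ⟨a, Finset.mem_insert_of_mem ha, ?_⟩
        intro b hb
        rcases Finset.mem_insert.1 hb with rfl | hb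
        · exact Or.inl heq
        · exact hmax b hb
      · refine ⟨x, Finset.mem_insert_self x s, ?_⟩
        intro b hb
        rcases Finset.mem_insert.1 hb with rfl | hb
        · exact Or.inl rfl
        · rcases hmax b hb with rfl | hlt
          · exact Or.inr hgt
          · exact Or.inr (trans_of r hlt hgt)

private lemma exists_isLMF (S : PAQModule K MonP P A) (f : S.F) (hf : f ≠ 0) :
    ∃ v, S.IsLMF f v := by
  classical
  set t : Finset (Fin S.r × S.Std) :=
    Finset.univ.biUnion (fun i => (S.basisA.repr (f i)).support.image (fun b => (i, b)))
    with ht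
  have hmem : ∀ v : Fin S.r × S.Std, v ∈ t ↔ v ∈ S.suppF f := by
    intro v
    simp only [ht, Finset.mem_biUnion, Finset.mem_univ, true_and, Finset.mem_image]
    constructor
    · rintro ⟨i, b, hb, hv⟩
      cases hv
      exact Finsupp.mem_support_iff.1 hb
    · intro hv
      exact ⟨v.1, v.2, Finsupp.mem_support_iff.2 hv, rfl⟩
  obtain ⟨i, hi⟩ := Function.ne_iff.1 hf
  have hri : S.basisA.repr (f i) ≠ 0 := by
    intro h
    exact hi (by simpa using (LinearEquiv.map_eq_zero_iff _).1 h)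
  obtain ⟨b, hb⟩ := Finsupp.support_nonempty_iff.2 hri
  have hne : t.Nonempty := ⟨(i, b), (hmem (i, b)).2 (Finsupp.mem_support_iff.1 hb)⟩
  obtain ⟨a, ha, hmax⟩ := exists_greatest_aux S.ltF S.ltF_sto t hne
  exact ⟨a, (hmem a).1 ha, fun w hw => hmax w ((hmem w).2 hw)⟩

private lemma sdvdF_trans (S : PAQModule K MonP P A) {u v w : Fin S.r × S.Std}
    (h1 : S.SDvdF u v) (h2 : S.SDvdF v w) : S.SDvdF u w := by
  obtain ⟨h1a, m1, h1b⟩ := h1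
  obtain ⟨h2a, m2, h2b⟩ := h2
  refine ⟨h1a.trans h2a, ?_⟩
  have h := S.mul_assoc' u.2.1 m1 m2
  rw [h1b] at h
  simp only [Option.bind_some] at h
  rw [h2b] at h
  cases hmm : S.mul m1 m2 with
  | none => rw [hmm] at h; simp at h
  | some m3 =>
    rw [hmm] at h
    simp only [Option.bind_some] at h
    exact ⟨m3, h.symm⟩

private lemma stdrep_reducible (S : PAQModule K MonP P A) (G' : Finset S.F) (d : S.F)
    (hrep : S.HasStdRep G' d) (vd : Fin S.r × S.Std) (hvd : S.IsLMF d vd) :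
    ∃ g' ∈ G', ∃ vg', S.IsLMF g' vg' ∧ S.SDvdF vg' vd := by
  haveI := S.ltF_sto
  obtain ⟨k, α, g, c, hα, hmem, heq, hlead⟩ := hrep
  have hc : S.basisA.repr (d vd.1) vd.2 ≠ 0 := hvd.1
  have hsum : S.basisA.repr (d vd.1) vd.2
      = ∑ i, α i * S.basisA.repr (S.smulF (g i) (S.mono (c i)) vd.1) vd.2 := by
    rw [heq]
    simp [Finset.sum_apply, map_sum, Finsupp.finset_sum_apply, Pi.smul_apply, map_smul,
      Finsupp.smul_apply, smul_eq_mul]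
  rw [hsum] at hc
  obtain ⟨i, -, hi⟩ := Finset.exists_ne_zero_of_sum_ne_zero hc
  have hi' : S.basisA.repr (S.smulF (g i) (S.mono (c i)) vd.1) vd.2 ≠ 0 :=
    right_ne_zero_of_mul hi
  obtain ⟨vg, hLMg, hsc, m, hm, hmul, hLMt, hle⟩ := hlead i
  have h1 := hLMt.2 vd hi'
  have h2 := hle vd hvd
  have heqv : vd = (vg.1, ⟨m, hm⟩) := by
    rcases h1 with h1 | h1
    · exact h1
    rcases h2 with h2 | h2
    · exact h2.symm
    · exact absurd (trans_of S.ltF h1 h2) (irrefl_of S.ltF vd)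
  refine ⟨g i, hmem i, vg, hLMg, ?_, (c i).1, ?_⟩
  · rw [heqv]
  · rw [heqv]
    exact hmul

/-- replacing `g ∈ G` by `NF(g, G∖{g})` preserves reducibility. -/
theorem reducible_after_interreduction_step (S : PAQModule K MonP P A)
    [DecidableEq S.F] (M : Set S.F) (hM : RightMod.IsSubmodule K A M)
    (G : Finset S.F) (hG : ↑G ⊆ M \ {0})
    (NF : S.F → Finset S.F → S.F) (hNF : S.IsNFfun NF)
    (f : S.F) (hf : f ∈ M) (hf0 : f ≠ 0) (hred : S.Reducible G f) :
    ∀ g ∈ G, S.Reducible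
      (if NF g (G.erase g) = 0 then G.erase g
        else insert (NF g (G.erase g)) (G.erase g)) f := by
  classical
  haveI := S.ltF_sto
  intro g hg
  obtain ⟨g₀, hg₀, vg, vf, hLMg0, hLMf, hdvd⟩ := hred
  by_cases hgg : g₀ = g
  swap
  · have hmem : g₀ ∈ G.erase g := Finset.mem_erase.2 ⟨hgg, hg₀⟩
    split_ifs with hz
    · exact ⟨g₀, hmem, vg, vf, hLMg0, hLMf, hdvd⟩
    · exact ⟨g₀, Finset.mem_insert_of_mem hmem, vg, vf, hLMg0, hLMf, hdvd⟩
  subst hgg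
  set G' := G.erase g₀ with hG'
  obtain ⟨-, hirr, hrep⟩ := hNF g₀ G'
  by_cases h0 : NF g₀ G' = 0
  · rw [if_pos h0]
    rw [h0, sub_zero] at hrep
    obtain ⟨g', hg', vg', hLM', hdvd'⟩ := stdrep_reducible S G' g₀ hrep vg hLMg0
    exact ⟨g', hg', vg', vf, hLM', hLMf, sdvdF_trans S hdvd' hdvd⟩
  · rw [if_neg h0]
    set h := NF g₀ G' with hh
    set d := g₀ - h with hd
    have hnred : ¬ S.Reducible G' h := by
      rcases hirr with h1 | h1
      · exact absurd h1 h0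
      · exact h1
    -- key coefficient identity
    have hgdh : ∀ v : Fin S.r × S.Std, S.basisA.repr (g₀ v.1) v.2
        = S.basisA.repr (d v.1) v.2 + S.basisA.repr (h v.1) v.2 := by
      intro v
      have : d v.1 = g₀ v.1 - h v.1 := rfl
      rw [this, map_sub, Finsupp.sub_apply]
      ring
    -- contradiction engine: LM h cannot coincide with LM d
    have hcontra : ∀ v, S.IsLMF h v → S.IsLMF d v → False := by
      intro v hvh hvd
      obtain ⟨g', hg', vg', hLM', hdvd'⟩ := stdrep_reducible S G' d hrep v hvd
      exact hnred ⟨g', hg', vg', v, hLM', hvh, hdvd'⟩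
    have hcg : S.basisA.repr (g₀ vg.1) vg.2 ≠ 0 := hLMg0.1
    have hcase : S.basisA.repr (d vg.1) vg.2 ≠ 0 ∨ S.basisA.repr (h vg.1) vg.2 ≠ 0 := by
      by_contra hcc
      push_neg at hcc
      rw [hgdh vg, hcc.1, hcc.2, add_zero] at hcg
      exact hcg rfl
    rcases hcase with hcd | hch
    · -- the leading monomial of g₀ survives in d
      have hdne : d ≠ 0 := by
        intro e
        rw [e] at hcd
        simp at hcd
      obtain ⟨vd, hvd⟩ := exists_isLMF S d hdne
      rcases hvd.2 vg (show vg ∈ S.suppF d from hcd) with heqv | hlt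
      · obtain ⟨g', hg', vg', hLM', hdvd'⟩ :=
          stdrep_reducible S G' d hrep vg (heqv ▸ hvd)
        exact ⟨g', Finset.mem_insert_of_mem hg', vg', vf, hLM', hLMf,
          sdvdF_trans S hdvd' hdvd⟩
      · exfalso
        have hgvd : S.basisA.repr (g₀ vd.1) vd.2 = 0 := by
          by_contra hne
          rcases hLMg0.2 vd (show vd ∈ S.suppF g₀ from hne) with heq2 | hlt2
          · rw [heq2] at hlt
            exact irrefl_of S.ltF vg hlt
          · exact irrefl_of S.ltF vg (trans_of S.ltF hlt hlt2)
        have hhvd : S.basisA.repr (h vd.1) vd.2 ≠ 0 := by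
          intro hzz
          have := hgdh vd
          rw [hgvd, hzz, add_zero] at this
          exact hvd.1 this.symm
        obtain ⟨vh, hvh⟩ := exists_isLMF S h h0
        rcases hvh.2 vd (show vd ∈ S.suppF h from hhvd) with heq2 | hlt2
        · exact hcontra vh hvh (heq2 ▸ hvd)
        · have hgvh : S.basisA.repr (g₀ vh.1) vh.2 = 0 := by
            by_contra hne
            have hlt3 : S.ltF vg vh := trans_of S.ltF hlt hlt2
            rcases hLMg0.2 vh (show vh ∈ S.suppF g₀ from hne) with heq3 | hlt4
            · rw [heq3] at hlt3
              exact irrefl_of S.ltF vg hlt3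
            · exact irrefl_of S.ltF vg (trans_of S.ltF hlt3 hlt4)
          have hdvh : S.basisA.repr (d vh.1) vh.2 ≠ 0 := by
            intro hzz
            have := hgdh vh
            rw [hgvh, hzz, zero_add] at this
            exact hvh.1 this.symm
          rcases hvd.2 vh (show vh ∈ S.suppF d from hdvh) with heq4 | hlt5
          · rw [heq4] at hlt2
            exact irrefl_of S.ltF vd hlt2
          · exact irrefl_of S.ltF vh (trans_of S.ltF hlt5 hlt2)
    · -- the leading monomial of g₀ survives in h
      obtain ⟨vh, hvh⟩ := exists_isLMF S h h0
      rcases hvh.2 vg (show vg ∈ S.suppF h from hch) with heqv | hlt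
      · exact ⟨h, Finset.mem_insert_self _ _, vh, vf, hvh, hLMf, heqv ▸ hdvd⟩
      · exfalso
        have hgvh : S.basisA.repr (g₀ vh.1) vh.2 = 0 := by
          by_contra hne
          rcases hLMg0.2 vh (show vh ∈ S.suppF g₀ from hne) with heq2 | hlt2
          · rw [heq2] at hlt
            exact irrefl_of S.ltF vg hlt
          · exact irrefl_of S.ltF vg (trans_of S.ltF hlt hlt2)
        have hdvh : S.basisA.repr (d vh.1) vh.2 ≠ 0 := by
          intro hzz
          have := hgdh vh
          rw [hgvh, hzz, zero_add] at this
          exact hvh.1 this.symm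
        have hdne : d ≠ 0 := by
          intro e
          rw [e] at hdvh
          simp at hdvh
        obtain ⟨vd, hvd⟩ := exists_isLMF S d hdne
        rcases hvd.2 vh (show vh ∈ S.suppF d from hdvh) with heq2 | hlt2
        · exact hcontra vh hvh (heq2 ▸ hvd)
        · have hgvd : S.basisA.repr (g₀ vd.1) vd.2 = 0 := by
            by_contra hne
            have hlt3 : S.ltF vg vd := trans_of S.ltF hlt hlt2
            rcases hLMg0.2 vd (show vd ∈ S.suppF g₀ from hne) with heq3 | hlt4
            · rw [heq3] at hlt3
              exact irrefl_of S.ltF vg hlt3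
            · exact irrefl_of S.ltF vg (trans_of S.ltF hlt3 hlt4)
          have hhvd : S.basisA.repr (h vd.1) vd.2 ≠ 0 := by
            intro hzz
            have := hgdh vd
            rw [hgvd, hzz, add_zero] at this
            exact hvd.1 this.symm
          rcases hvh.2 vd (show vd ∈ S.suppF h from hhvd) with heq4 | hlt5
          · rw [heq4] at hlt2
            exact irrefl_of S.ltF vh hlt2
          · exact irrefl_of S.ltF vh (trans_of S.ltF hlt2 hlt5)

end Statements
end

section
/- For any finite subset G ⊆ M∖{0}, there exists an interreduced finite subset G' ⊆ M∖{0} (i.e., every g ∈ G' is irreducible with respect to G'∖{g}) such that every f ∈ F reducible with respect to G is reducible with respect to G'. -/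
/-!  An abstract framework for the standard-basis theory of right modules over
path algebra quotients, following S. King, "A non-commutative F5 algorithm with
an application to the computation of Loewy layers".

`PathAlgQuot` bundles: the monomials (directed paths) of a path algebra `P`
with their partial concatenation product, a monomial ordering, `P` itself with
its monomial basis, and a quotient algebra `A` of `P` via `ψ`. -/

open scoped BigOperators

section Statements

variable {K : Type*} [Field K] {MonP : Type*} {P : Type*} {A : Type*}
  [Ring P] [Algebra K P] [Ring A] [Algebra K A]

private lemma lmf_unique (S : PAQModule K MonP P A) {f : S.F} {v w : Fin S.r × S.Std}
    (hv : S.IsLMF f v) (hw : S.IsLMF f w) : v = w := by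
  rcases hv.2 w hw.1 with h | h
  · exact h.symm
  rcases hw.2 v hv.1 with h' | h'
  · exact h'
  exact absurd (S.ltF_sto.toIsTrans.trans _ _ _ h h') (S.ltF_sto.toIrrefl.irrefl _)

private lemma sdvd_trans (S : PAQModule K MonP P A) {a b c : S.Std}
    (h1 : S.SDvd a b) (h2 : S.SDvd b c) : S.SDvd a c := by
  obtain ⟨m, hm⟩ := h1
  obtain ⟨m', hm'⟩ := h2
  have h := S.mul_assoc' a.1 m m'
  rw [hm] at h
  simp only [Option.bind_some, hm'] at h
  cases hmm : S.mul m m' with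
  | none => rw [hmm] at h; simp at h
  | some x =>
    rw [hmm] at h
    simp only [Option.bind_some] at h
    exact ⟨x, h.symm⟩

/-- every finite subset of `M∖{0}` admits an interreduced subset
preserving reducibility. -/
theorem exists_interreduction (S : PAQModule K MonP P A) [DecidableEq S.F]
    [FiniteDimensional K A] (hadm : S.Admissible)
    (M : Set S.F) (hM : RightMod.IsSubmodule K A M)
    (G : Finset S.F) (hG : ↑G ⊆ M \ {0}) :
    ∃ G' : Finset S.F, ↑G' ⊆ M \ {0} ∧ S.Interreduced G' ∧
      ∀ f : S.F, S.Reducible G f → S.Reducible G' f := by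
  classical
  clear hadm hM
  revert hG
  induction G using Finset.strongInduction with
  | _ G ih =>
    intro hG
    by_cases hint : S.Interreduced G
    · exact ⟨G, hG, hint, fun f hf => hf⟩
    · simp only [PAQModule.Interreduced] at hint
      push_neg at hint
      obtain ⟨g, hgG, hred⟩ := hint
      obtain ⟨G', h1, h2, h3⟩ := ih (G.erase g) (Finset.erase_ssubset hgG)
        ((Finset.coe_subset.mpr (Finset.erase_subset g G)).trans hG)
      refine ⟨G', h1, h2, fun f hf => h3 f ?_⟩
      obtain ⟨h, hhG, vh, vf, hlh, hlf, hdvd⟩ := hf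
      by_cases hhg : h = g
      · subst hhg
        obtain ⟨g', hg'G, vg', vh', hlg', hlh', hdvd'⟩ := hred
        have hvv : vh' = vh := lmf_unique S hlh' hlh
        subst hvv
        exact ⟨g', hg'G, vg', vf, hlg', hlf, hdvd'.1.trans hdvd.1,
          sdvd_trans S hdvd'.2 hdvd.2⟩
      · exact ⟨h, Finset.mem_erase.mpr ⟨hhg, hhG⟩, vh, vf, hlh, hlf, hdvd⟩

end Statements
end

section
/- If f ∈ F is (weakly) s-reducible with respect to the submodule M, then there exists a signed element g of M∖{0} with poly(g) being σ(g)-irreducible with respect to M such that f is (weakly) s-reducible with respect to {g}. -/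
/-!  An abstract framework for the standard-basis theory of right modules over
path algebra quotients, following S. King, "A non-commutative F5 algorithm with
an application to the computation of Loewy layers".

`PathAlgQuot` bundles: the monomials (directed paths) of a path algebra `P`
with their partial concatenation product, a monomial ordering, `P` itself with
its monomial basis, and a quotient algebra `A` of `P` via `ψ`. -/

open scoped BigOperators

/-! ### Auxiliary lemmas for Statement 12 -/

section AuxiliaryForStatement12

namespace PAQSigned

variable {K : Type*} [Field K] {MonP : Type*} {P : Type*} {A : Type*}
  [Ring P] [Algebra K P] [Ring A] [Algebra K A]
variable (S : PAQSigned K MonP P A)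

/- order helpers -/
lemma aux_ltE_trans {a b c : S.Sig} (h1 : S.ltE a b) (h2 : S.ltE b c) : S.ltE a c := by
  haveI := S.ltE_sto
  exact _root_.trans h1 h2

lemma aux_ltE_irrefl (a : S.Sig) : ¬ S.ltE a a := by
  haveI := S.ltE_sto
  exact irrefl a

lemma aux_ltF_trans {a b c : Fin S.r × S.Std} (h1 : S.ltF a b) (h2 : S.ltF b c) : S.ltF a c := by
  haveI := S.ltF_sto
  exact _root_.trans h1 h2

lemma aux_ltF_irrefl (a : Fin S.r × S.Std) : ¬ S.ltF a a := by
  haveI := S.ltF_sto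
  exact irrefl a

lemma aux_lt_irrefl (a : MonP) : ¬ S.lt a a := by
  haveI := S.lt_sto
  exact irrefl a

lemma aux_lt_trichot (a b : MonP) : S.lt a b ∨ a = b ∨ S.lt b a := by
  haveI := S.lt_sto
  exact trichotomous a b

/-- existence of a maximum of a nonempty finite set w.r.t. a strict total order -/
lemma aux_finset_max {α : Type*} {r : α → α → Prop}
    (htri : ∀ a b, r a b ∨ a = b ∨ r b a)
    (htr : ∀ {a b c}, r a b → r b c → r a c)
    (s : Finset α) (hs : s.Nonempty) : ∃ m ∈ s, ∀ x ∈ s, x = m ∨ r x m := by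
  classical
  induction s using Finset.induction_on with
  | empty => exact absurd hs (by simp)
  | @insert a t ha ih =>
    rcases t.eq_empty_or_nonempty with rfl | ht'
    · exact ⟨a, by simp, by simp⟩
    · obtain ⟨m, hm, hmax⟩ := ih ht'
      rcases htri a m with hlt | heq | hgt
      · refine ⟨m, Finset.mem_insert_of_mem hm, ?_⟩
        intro x hx
        rcases Finset.mem_insert.mp hx with rfl | hx'
        · exact Or.inr hlt
        · exact hmax x hx'
      · refine ⟨m, Finset.mem_insert_of_mem hm, ?_⟩
        intro x hx
        rcases Finset.mem_insert.mp hx with rfl | hx'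
        · exact Or.inl heq
        · exact hmax x hx'
      · refine ⟨a, Finset.mem_insert_self a t, ?_⟩
        intro x hx
        rcases Finset.mem_insert.mp hx with rfl | hx'
        · exact Or.inl rfl
        · rcases hmax x hx' with rfl | hlt'
          · exact Or.inr hgt
          · exact Or.inr (htr hlt' hgt)

/-- every nonzero element of `A` has a leading monomial -/
lemma aux_exists_isLMA {x : A} (hx : (S.basisA.repr x).support.Nonempty) :
    ∃ t, S.IsLMA x t := by
  haveI := S.lt_sto
  obtain ⟨m, hm, hmax⟩ := aux_finset_max (r := fun b b' : S.Std => S.lt b.1 b'.1)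
    (fun a b => by
      rcases trichotomous_of S.lt a.1 b.1 with h | h | h
      · exact Or.inl h
      · exact Or.inr (Or.inl (Subtype.ext h))
      · exact Or.inr (Or.inr h))
    (fun h1 h2 => trans_of S.lt h1 h2) _ hx
  exact ⟨m, hm, hmax⟩

/- computations in `P` -/
lemma aux_repr_mul_basis (p : P) (x : MonP) :
    S.basisP.repr (p * S.basisP x) =
      (S.basisP.repr p).sum fun m a => (S.mul m x).elim 0 fun z => Finsupp.single z a := by
  conv_lhs => rw [← S.basisP.linearCombination_repr p]
  rw [Finsupp.linearCombination_apply, Finsupp.sum_mul, map_finsuppSum]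
  refine Finsupp.sum_congr fun m hm => ?_
  rw [smul_mul_assoc, S.basisP_mul]
  rcases h : S.mul m x with _ | z
  · simp
  · simp [Module.Basis.repr_self, Finsupp.smul_single]

lemma aux_repr_basis_mul (p : P) (x : MonP) :
    S.basisP.repr (S.basisP x * p) =
      (S.basisP.repr p).sum fun m a => (S.mul x m).elim 0 fun z => Finsupp.single z a := by
  conv_lhs => rw [← S.basisP.linearCombination_repr p]
  rw [Finsupp.linearCombination_apply, Finsupp.mul_sum, map_finsuppSum]
  refine Finsupp.sum_congr fun m hm => ?_
  rw [mul_smul_comm, S.basisP_mul]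
  rcases h : S.mul x m with _ | z
  · simp
  · simp [Module.Basis.repr_self, Finsupp.smul_single]

lemma aux_repr_mul_basis_apply_eq (p : P) (x : MonP) {m₀ y₀ : MonP}
    (hm₀ : S.mul m₀ x = some y₀)
    (hother : ∀ m ∈ (S.basisP.repr p).support, m ≠ m₀ → ∀ z, S.mul m x = some z → z ≠ y₀) :
    S.basisP.repr (p * S.basisP x) y₀ = S.basisP.repr p m₀ := by
  classical
  rw [aux_repr_mul_basis, Finsupp.sum_apply, Finsupp.sum, Finset.sum_eq_single m₀]
  · rw [hm₀]
    exact Finsupp.single_eq_same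
  · intro m hm hne
    rcases h : S.mul m x with _ | z
    · simp
    · simp only [Option.elim]
      exact Finsupp.single_eq_of_ne (Ne.symm (hother m hm hne z h))
  · intro h
    rw [Finsupp.notMem_support_iff.mp h, hm₀]
    simp

lemma aux_repr_mul_basis_apply_ne (p : P) (x : MonP) {y : MonP}
    (h : S.basisP.repr (p * S.basisP x) y ≠ 0) :
    ∃ m ∈ (S.basisP.repr p).support, S.mul m x = some y := by
  rw [aux_repr_mul_basis, Finsupp.sum_apply, Finsupp.sum] at h
  obtain ⟨m, hm, hne⟩ := Finset.exists_ne_zero_of_sum_ne_zero h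
  refine ⟨m, hm, ?_⟩
  rcases h' : S.mul m x with _ | z
  · rw [h'] at hne
    simp at hne
  · rw [h'] at hne
    simp only [Option.elim] at hne
    by_cases hz : z = y
    · rw [← hz]
    · exact absurd (Finsupp.single_eq_of_ne (Ne.symm hz)) hne

lemma aux_repr_basis_mul_apply_eq (p : P) (x : MonP) {m₀ y₀ : MonP}
    (hm₀ : S.mul x m₀ = some y₀)
    (hother : ∀ m ∈ (S.basisP.repr p).support, m ≠ m₀ → ∀ z, S.mul x m = some z → z ≠ y₀) :
    S.basisP.repr (S.basisP x * p) y₀ = S.basisP.repr p m₀ := by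
  classical
  rw [aux_repr_basis_mul, Finsupp.sum_apply, Finsupp.sum, Finset.sum_eq_single m₀]
  · rw [hm₀]
    exact Finsupp.single_eq_same
  · intro m hm hne
    rcases h : S.mul x m with _ | z
    · simp
    · simp only [Option.elim]
      exact Finsupp.single_eq_of_ne (Ne.symm (hother m hm hne z h))
  · intro h
    rw [Finsupp.notMem_support_iff.mp h, hm₀]
    simp

lemma aux_repr_basis_mul_apply_ne (p : P) (x : MonP) {y : MonP}
    (h : S.basisP.repr (S.basisP x * p) y ≠ 0) :
    ∃ m ∈ (S.basisP.repr p).support, S.mul x m = some y := by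
  rw [aux_repr_basis_mul, Finsupp.sum_apply, Finsupp.sum] at h
  obtain ⟨m, hm, hne⟩ := Finset.exists_ne_zero_of_sum_ne_zero h
  refine ⟨m, hm, ?_⟩
  rcases h' : S.mul x m with _ | z
  · rw [h'] at hne
    simp at hne
  · rw [h'] at hne
    simp only [Option.elim] at hne
    by_cases hz : z = y
    · rw [← hz]
    · exact absurd (Finsupp.single_eq_of_ne (Ne.symm hz)) hne

/- computations in `A` -/
lemma aux_basisA_mul_mono (b c : S.Std) : S.basisA b * S.mono c = S.mulA b c := by
  rw [S.basisA_eq]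
  show S.ψ (S.basisP b.1) * S.ψ (S.basisP c.1) = _
  rw [← map_mul, S.basisP_mul]
  rcases h : S.mul b.1 c.1 with _ | z
  · simp [PAQBasis.mulA, h]
  · simp [PAQBasis.mulA, h]

lemma aux_repr_mul_mono (q : A) (c : S.Std) :
    S.basisA.repr (q * S.mono c) =
      (S.basisA.repr q).sum fun b a => a • S.basisA.repr (S.mulA b c) := by
  conv_lhs => rw [← S.basisA.linearCombination_repr q]
  rw [Finsupp.linearCombination_apply, Finsupp.sum_mul, map_finsuppSum]
  refine Finsupp.sum_congr fun b hb => ?_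
  rw [smul_mul_assoc, aux_basisA_mul_mono, map_smul]

lemma aux_repr_mul_mono_apply (q : A) (c : S.Std) (y : S.Std) :
    S.basisA.repr (q * S.mono c) y =
      (S.basisA.repr q).sum fun b a => a * S.basisA.repr (S.mulA b c) y := by
  rw [aux_repr_mul_mono, Finsupp.sum_apply]
  refine Finsupp.sum_congr fun b hb => ?_
  rw [Finsupp.smul_apply, smul_eq_mul]

/- evaluation and scalar action -/
lemma aux_ev_mul (ft : S.E) (x : P) :
    S.ev (fun i => ft i * x) = S.smulF (S.ev ft) (S.ψ x) := by
  funext j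
  show (∑ i, S.smulF (S.gen i) (S.ψ (ft i * x))) j
      = (∑ i, S.smulF (S.gen i) (S.ψ (ft i))) j * S.ψ x
  rw [Finset.sum_apply, Finset.sum_apply, Finset.sum_mul]
  refine Finset.sum_congr rfl fun i _ => ?_
  show S.gen i j * S.ψ (ft i * x) = S.gen i j * S.ψ (ft i) * S.ψ x
  rw [map_mul, mul_assoc]

/- units -/
lemma aux_exists_right_unit (x : MonP) : ∃ u : MonP, S.mul x u = some x := by
  by_contra hno
  push_neg at hno
  have h1 : S.basisP.repr (S.basisP x * (1 : P)) x = 0 := by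
    rw [aux_repr_basis_mul, Finsupp.sum_apply, Finsupp.sum]
    refine Finset.sum_eq_zero fun m hm => ?_
    rcases h : S.mul x m with _ | z
    · simp
    · simp only [Option.elim]
      refine Finsupp.single_eq_of_ne ?_
      intro hz
      exact (hno m) (hz ▸ h)
  rw [mul_one, S.basisP.repr_self, Finsupp.single_eq_same] at h1
  exact one_ne_zero h1

lemma aux_unit_absorb {a b ab u : MonP} (h : S.mul a b = some ab) (hu : S.mul b u = some b) :
    S.mul ab u = some ab := by
  have hass := S.mul_assoc' a b u
  rw [h, hu] at hass
  simp only [Option.bind_some] at hass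
  rw [hass, h]

lemma aux_unit_mem_std {x u : MonP} (hx : x ∈ S.Std) (hu : S.mul x u = some x) : u ∈ S.Std := by
  by_contra hns
  have hns' : ∃ z : P, z ≠ 0 ∧ S.ψ z = 0 ∧ S.IsLMP z u := not_not.mp hns
  obtain ⟨z, hz0, hzψ, hlmp⟩ := hns'
  have hother : ∀ m ∈ (S.basisP.repr z).support, m ≠ u → ∀ w, S.mul x m = some w → w ≠ x := by
    intro m hm hne w hw hwx
    rcases hlmp.2 m hm with he | hlt
    · exact hne he
    · subst hwx
      exact S.aux_lt_irrefl w (S.lt_mul_left hlt hw hu)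
  have hcoef : S.basisP.repr (S.basisP x * z) x = S.basisP.repr z u :=
    aux_repr_basis_mul_apply_eq S z x hu hother
  have hu0 : S.basisP.repr z u ≠ 0 := Finsupp.mem_support_iff.mp hlmp.1
  refine hx ⟨S.basisP x * z, ?_, ?_, ?_, ?_⟩
  · intro h0
    rw [h0, map_zero] at hcoef
    exact hu0 (by rw [← hcoef]; rfl)
  · rw [map_mul, hzψ, mul_zero]
  · rw [Finsupp.mem_support_iff, hcoef]
    exact hu0
  · intro m' hm'
    obtain ⟨m, hm, hmul⟩ := aux_repr_basis_mul_apply_ne S z x (Finsupp.mem_support_iff.mp hm')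
    rcases hlmp.2 m hm with rfl | hlt
    · left
      rw [hu] at hmul
      exact (Option.some_inj.mp hmul).symm
    · right
      exact S.lt_mul_left hlt hmul hu

lemma aux_smallCofactor_unit (b u : S.Std) (hu : S.mul b.1 u.1 = some b.1) :
    S.SmallCofactor b u := by
  have hA : S.mulA b u = S.basisA b := by
    rw [S.basisA_eq]
    simp [PAQBasis.mulA, hu]
  rintro ⟨t, ht⟩
  rcases ht with ⟨h0, -⟩ | ⟨t', -, hlma, hnd⟩
  · rw [hA] at h0
    exact S.basisA.ne_zero b h0
  · rw [hA] at hlma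
    have hmem := hlma.1
    rw [S.basisA.repr_self, Finsupp.support_single_ne_zero b one_ne_zero] at hmem
    have ht' : t' = b := Finset.mem_singleton.mp hmem
    subst ht'
    exact hnd ⟨u.1, hu⟩

/- leading monomials in F -/
lemma aux_isLMF_unique {q : S.F} {v w : Fin S.r × S.Std}
    (h1 : S.IsLMF q v) (h2 : S.IsLMF q w) : v = w := by
  rcases h2.2 v h1.1 with he | hlt
  · exact he
  rcases h1.2 w h2.1 with he | hlt2
  · exact he.symm
  · exact absurd (S.aux_ltF_trans hlt hlt2) (S.aux_ltF_irrefl v)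

lemma aux_ne_zero_of_isLMF {q : S.F} {v : Fin S.r × S.Std} (h : S.IsLMF q v) : q ≠ 0 := by
  intro h0
  have := h.1
  rw [h0] at this
  have : S.basisA.repr ((0 : S.F) v.1) v.2 ≠ 0 := this
  simp at this

lemma aux_sigMul_eq {sg : S.Sig} {c : S.Std} {sc : S.Sig} (h : S.sigMul sg c = some sc) :
    S.mul sg.2 c.1 = some sc.2 ∧ sc.1 = sg.1 := by
  obtain ⟨z, hz, hzz⟩ := Option.map_eq_some_iff.mp h
  constructor
  · rw [← hzz]
    exact hz
  · rw [← hzz]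

/-- the product of a signed element with a monomial is signed (when the
signature product is defined) -/
lemma aux_isSigned_smul {h : S.F} {sh : S.Sig} (hs : S.IsSigned h sh) (c' : S.Std) {y : MonP}
    (hy : S.mul sh.2 c'.1 = some y) :
    S.IsSigned (S.smulF h (S.mono c')) (sh.1, y) := by
  obtain ⟨ht, hlme, hev⟩ := hs
  refine ⟨fun i => ht i * S.basisP c'.1, ⟨?_, ?_⟩, ?_⟩
  · rw [Finsupp.mem_support_iff]
    rw [aux_repr_mul_basis_apply_eq S (ht sh.1) c'.1 hy ?_]
    · exact Finsupp.mem_support_iff.mp hlme.1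
    · intro m hm hne z hz hzy
      rcases hlme.2 sh.1 m hm with he | hlt
      · exact hne (congrArg Prod.snd he)
      · subst hzy
        exact S.aux_ltE_irrefl (sh.1, z) (S.ltE_mul hlt hz hy)
  · intro j m' hm'
    obtain ⟨m, hm, hmul⟩ :=
      aux_repr_mul_basis_apply_ne S (ht j) c'.1 (Finsupp.mem_support_iff.mp hm')
    rcases hlme.2 j m hm with he | hlt
    · left
      have hj : j = sh.1 := congrArg Prod.fst he
      have hm2 : m = sh.2 := congrArg Prod.snd he
      subst hj
      subst hm2
      rw [hy] at hmul
      rw [Option.some_inj.mp hmul]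
    · right
      exact S.ltE_mul hlt hmul hy
  · rw [aux_ev_mul, hev]
    rfl

/-- the leading monomial of the product of an element of `F` with a small
cofactor of its leading monomial -/
lemma aux_isLMF_smul {h : S.F} {vh : Fin S.r × S.Std} (hlm : S.IsLMF h vh) (c' : S.Std)
    {m₂ : MonP} (hm₂ : m₂ ∈ S.Std) (hsm : S.SmallCofactor vh.2 c')
    (hmul : S.mul vh.2.1 c'.1 = some m₂) :
    S.IsLMF (S.smulF h (S.mono c')) (vh.1, (⟨m₂, hm₂⟩ : S.Std)) := by
  have hAb : S.mulA vh.2 c' = S.basisA ⟨m₂, hm₂⟩ := by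
    rw [S.basisA_eq]
    simp [PAQBasis.mulA, hmul]
  have hterm : ∀ (j : Fin S.r) (b : S.Std), (j, b) ∈ S.suppF h → (j, b) ≠ vh →
      ∀ y : S.Std, S.basisA.repr (S.mulA b c') y ≠ 0 →
        S.ltF (j, y) (vh.1, (⟨m₂, hm₂⟩ : S.Std)) := by
    intro j b hb hne y hy
    have hlt : S.ltF (j, b) vh := (hlm.2 (j, b) hb).resolve_left hne
    rcases S.ltF_mul vh.1 j vh.2 b c' m₂ hm₂ hsm hmul hlt with h0 | hall
    · rw [h0] at hy
      simp at hy
    · obtain ⟨t, htm⟩ := S.aux_exists_isLMA ⟨y, Finsupp.mem_support_iff.mpr hy⟩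
      have h1 : S.ltF (j, t) (vh.1, ⟨m₂, hm₂⟩) := hall t htm
      rcases htm.2 y (Finsupp.mem_support_iff.mpr hy) with rfl | hyt
      · exact h1
      · exact S.aux_ltF_trans (S.ltF_compat j y t hyt) h1
  constructor
  · show S.basisA.repr ((S.smulF h (S.mono c')) vh.1) (⟨m₂, hm₂⟩ : S.Std) ≠ 0
    show S.basisA.repr (h vh.1 * S.mono c') (⟨m₂, hm₂⟩ : S.Std) ≠ 0
    rw [aux_repr_mul_mono_apply, Finsupp.sum,
      Finset.sum_eq_single_of_mem vh.2 (Finsupp.mem_support_iff.mpr hlm.1)]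
    · rw [hAb, S.basisA.repr_self, Finsupp.single_eq_same, mul_one]
      exact hlm.1
    · intro b hb hne
      have hzero : S.basisA.repr (S.mulA b c') ⟨m₂, hm₂⟩ = 0 := by
        by_contra hnz
        refine S.aux_ltF_irrefl (vh.1, (⟨m₂, hm₂⟩ : S.Std)) ?_
        refine hterm vh.1 b (Finsupp.mem_support_iff.mp hb) ?_ _ hnz
        intro he
        exact hne (congrArg Prod.snd he)
      rw [hzero, mul_zero]
  · intro w hw
    have hw' : S.basisA.repr (h w.1 * S.mono c') w.2 ≠ 0 := hw
    rw [aux_repr_mul_mono_apply, Finsupp.sum] at hw'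
    obtain ⟨b, hb, hbne⟩ := Finset.exists_ne_zero_of_sum_ne_zero hw'
    have hb1 : S.basisA.repr (h w.1) b ≠ 0 := left_ne_zero_of_mul hbne
    have hb2 : S.basisA.repr (S.mulA b c') w.2 ≠ 0 := right_ne_zero_of_mul hbne
    have hbmem : (w.1, b) ∈ S.suppF h := hb1
    by_cases hvb : (w.1, b) = vh
    · left
      have h1 : w.1 = vh.1 := (Prod.ext_iff.mp hvb).1
      have h2 : b = vh.2 := (Prod.ext_iff.mp hvb).2
      subst h2
      rw [hAb, S.basisA.repr_self] at hb2
      have : w.2 = ⟨m₂, hm₂⟩ := by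
        by_contra hne
        exact hb2 (Finsupp.single_eq_of_ne (Ne.symm (fun he => hne he.symm)))
      rw [← h1, ← this]
    · right
      have := hterm w.1 b hbmem hvb w.2 hb2
      exact this

/-- main auxiliary lemma: a (weak) reducer of `f` can be replaced by an
irreducible one; stated uniformly via a downward-closed signature bound `B` -/
lemma aux_main (f : S.F) (B : S.Sig → Prop)
    (hdc : ∀ {t t' : S.Sig}, S.ltE t' t → B t → B t')
    (hyp : ∃ g sg, g ≠ 0 ∧ S.IsSigned g sg ∧ ∃ vg c, S.IsLMF g vg ∧ S.SmallCofactor vg.2 c ∧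
      (∃ (m' : MonP) (hm : m' ∈ S.Std), S.mul vg.2.1 c.1 = some m' ∧
        ∃ vf, S.IsLMF f vf ∧ vf = (vg.1, ⟨m', hm⟩)) ∧
      ∃ sc, S.sigMul sg c = some sc ∧ B sc) :
    ∃ q sq, q ≠ 0 ∧ S.IsSigned q sq ∧ ¬ S.SigReducibleM q sq ∧
      ∃ vq c, S.IsLMF q vq ∧ S.SmallCofactor vq.2 c ∧
      (∃ (m' : MonP) (hm : m' ∈ S.Std), S.mul vq.2.1 c.1 = some m' ∧
        ∃ vf, S.IsLMF f vf ∧ vf = (vq.1, ⟨m', hm⟩)) ∧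
      ∃ sc, S.sigMul sq c = some sc ∧ B sc := by
  obtain ⟨g, sg, hg0, hsgn, vg, c, hlmg, hscof, ⟨m', hm, hmulc, vf, hlmf, hvf⟩, sc₀, hsig, hB⟩ :=
    hyp
  obtain ⟨hmulsg, hsc1⟩ := S.aux_sigMul_eq hsig
  obtain ⟨u, hu⟩ := S.aux_exists_right_unit c.1
  have hm'u : S.mul m' u = some m' := S.aux_unit_absorb hmulc hu
  have hscu : S.mul sc₀.2 u = some sc₀.2 := S.aux_unit_absorb hmulsg hu
  have huStd : u ∈ S.Std := S.aux_unit_mem_std hm hm'u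
  have hsmall : S.SmallCofactor (⟨m', hm⟩ : S.Std) ⟨u, huStd⟩ :=
    S.aux_smallCofactor_unit _ _ hm'u
  set W : Set S.Sig := {sq | (∃ q, q ≠ 0 ∧ S.IsSigned q sq ∧ S.IsLMF q vf) ∧
      S.mul sq.2 u = some sq.2 ∧ B sq} with hW
  have hW0 : sc₀ ∈ W := by
    refine ⟨⟨S.smulF g (S.mono c), ?_, ?_, ?_⟩, hscu, hB⟩
    · exact S.aux_ne_zero_of_isLMF (S.aux_isLMF_smul hlmg c hm hscof hmulc)
    · have hsgn' := S.aux_isSigned_smul hsgn c hmulsg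
      rwa [show (sg.1, sc₀.2) = sc₀ from Prod.ext hsc1.symm rfl] at hsgn'
    · rw [hvf]
      exact S.aux_isLMF_smul hlmg c hm hscof hmulc
  obtain ⟨sq, hsqW, hmin⟩ := S.ltE_wf.has_min W ⟨sc₀, hW0⟩
  obtain ⟨⟨q, hq0, hqsgn, hqlm⟩, hqu, hqB⟩ := hsqW
  refine ⟨q, sq, hq0, hqsgn, ?_, ?_⟩
  · rintro ⟨h, sh, hh0, hhsgn, vh, c', hlmh, hscof', ⟨m₂, hm₂, hmulc', vq, hlmq, hvq⟩,
      sc'', hsig'', hlt''⟩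
    obtain ⟨hmulsh, hsc''1⟩ := S.aux_sigMul_eq hsig''
    have hvqf : vq = vf := S.aux_isLMF_unique hlmq hqlm
    have hpair : (vh.1, (⟨m₂, hm₂⟩ : S.Std)) = (vg.1, (⟨m', hm⟩ : S.Std)) := by
      rw [← hvq, hvqf, hvf]
    have hm2m : m₂ = m' := congrArg (fun p => (Prod.snd p).1) hpair
    have hass := S.mul_assoc' vh.2.1 c'.1 u
    rw [hmulc'] at hass
    simp only [Option.bind_some] at hass
    rw [hm2m, hm'u] at hass
    rcases hcu : S.mul c'.1 u with _ | x
    · rw [hcu] at hass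
      simp at hass
    · rw [hcu] at hass
      simp only [Option.bind_some] at hass
      have hx : S.mul vh.2.1 x = some m' := hass.symm
      have hmulc'' : S.mul vh.2.1 c'.1 = some m' := hm2m ▸ hmulc'
      have hxc : x = c'.1 := by
        rcases S.aux_lt_trichot x c'.1 with hlt | he | hgt
        · exact absurd (S.lt_mul_left hlt hx hmulc'') (S.aux_lt_irrefl m')
        · exact he
        · exact absurd (S.lt_mul_left hgt hmulc'' hx) (S.aux_lt_irrefl m')
      have hcu' : S.mul c'.1 u = some c'.1 := by rw [hcu, hxc]
      have hass2 := S.mul_assoc' sh.2 c'.1 u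
      rw [hmulsh, hcu'] at hass2
      simp only [Option.bind_some] at hass2
      rw [hmulsh] at hass2
      have hmem : sc'' ∈ W := by
        refine ⟨⟨S.smulF h (S.mono c'), ?_, ?_, ?_⟩, hass2, hdc hlt'' hqB⟩
        · exact S.aux_ne_zero_of_isLMF (S.aux_isLMF_smul hlmh c' hm₂ hscof' hmulc')
        · have hsgn' := S.aux_isSigned_smul hhsgn c' hmulsh
          rwa [show (sh.1, sc''.2) = sc'' from Prod.ext hsc''1.symm rfl] at hsgn'
        · rw [← hvqf, hvq]
          exact S.aux_isLMF_smul hlmh c' hm₂ hscof' hmulc'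
      exact hmin sc'' hmem hlt''
  · refine ⟨vf, ⟨u, huStd⟩, hqlm, ?_, ⟨m', hm, ?_, vf, hlmf, ?_⟩, sq, ?_, hqB⟩
    · rw [hvf]
      exact hsmall
    · rw [hvf]
      exact hm'u
    · rw [hvf]
    · show S.sigMul sq ⟨u, huStd⟩ = some sq
      unfold PAQSigned.sigMul
      rw [hqu]
      simp

end PAQSigned

end AuxiliaryForStatement12
section Statements

variable {K : Type*} [Field K] {MonP : Type*} {P : Type*} {A : Type*}
  [Ring P] [Algebra K P] [Ring A] [Algebra K A]

/-- (weak) `s`-reducibility with respect to `M` is witnessed by a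
signed element that is irreducible with respect to `M`. -/
theorem reducible_by_irreducible (S : PAQSigned K MonP P A) (f : S.F) (s : S.Sig) :
    (S.SigReducibleM f s → ∃ g sg, g ≠ 0 ∧ S.IsSigned g sg ∧
        ¬ S.SigReducibleM g sg ∧ S.SigRedBy g sg f s) ∧
    (S.WeakSigReducibleM f s → ∃ g sg, g ≠ 0 ∧ S.IsSigned g sg ∧
        ¬ S.SigReducibleM g sg ∧ S.WeakSigRedBy g sg f s) := by
  constructor
  · rintro ⟨g, sg, hg0, hsgn, hby⟩
    obtain ⟨q, sq, hq0, hqsgn, hirr, hdata⟩ := S.aux_main f (fun t => S.ltE t s)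
      (fun hlt hb => S.aux_ltE_trans hlt hb) ⟨g, sg, hg0, hsgn, hby⟩
    exact ⟨q, sq, hq0, hqsgn, hirr, hdata⟩
  · rintro ⟨g, sg, hg0, hsgn, hby⟩
    obtain ⟨q, sq, hq0, hqsgn, hirr, hdata⟩ := S.aux_main f (fun t => S.leE t s)
      (fun hlt hb => hb.elim (fun he => Or.inr (he ▸ hlt))
        (fun hlt2 => Or.inr (S.aux_ltE_trans hlt hlt2))) ⟨g, sg, hg0, hsgn, hby⟩
    exact ⟨q, sq, hq0, hqsgn, hirr, hdata⟩

end Statements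
end
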